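/- arXiv:2204.13144 — 6 statements merged into one kernel-verified Lean document; each statement's English description precedes it below -/
import Mathlib

section
/- Suppose q satisfies the latent-level treatment bridge equation E[q(Z,A,X) | σ(A,U,X)] = 1/P(A|σ(U,X)) a.s. and proxy independence holds. Then for every a ∈ {0,1} and every t ∈ ℝ, P(T(a) > t) = E[ 1{A=a} · q(Z,a,X) · 1{T>t} ]. -/
open MeasureTheory ProbabilityTheory

/-- Conditional independence of `F` and `G` given the σ-algebra `m`: all conditional
covariances of bounded measurable functionals of the two groups vanish. -/
def CondIndepGiven {Ω α β : Type*} [MeasurableSpace Ω] [MeasurableSpace α] [MeasurableSpace β]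
    (P : Measure Ω) (m : MeasurableSpace Ω) (F : Ω → α) (G : Ω → β) : Prop :=
  ∀ (f : α → ℝ) (g : β → ℝ), Measurable f → Measurable g →
    (∃ C, ∀ x, |f x| ≤ C) → (∃ C, ∀ x, |g x| ≤ C) →
    (P[fun ω => f (F ω) * g (G ω)|m]) =ᵐ[P]
      fun ω => (P[fun ω' => f (F ω')|m]) ω * (P[fun ω' => g (G ω')|m]) ω

/-!
Let `h := E[1{T(a) > t} | U, X]`. On `{A = a}` the observed `T` is `T(a)`, so the right-hand side
is `E[f(Z, A, X) · 1{T(a) > t}]` with `f` a bounded function of `(Z, A, X)`. Proxy independence,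
upgraded from functions of `(Z, A)` to functions of `(Z, A, X)` because `X` is `σ(U, X)`-measurable,
replaces `1{T(a) > t}` by `h`. Since `1{A = a} h` is `σ(A, U, X)`-measurable, the bridge equation
turns `q(Z, A, X)` into `1 / P(A = a | U, X)`, and conditioning once more on `σ(U, X)` cancels this
weight against `P(A = a | U, X)`, leaving `E[h] = P(T(a) > t)`.
-/

open scoped ENNReal

theorem abs_indicator_one_le {α : Type*} (s : Set α) (x : α) :
    |s.indicator (1 : α → ℝ) x| ≤ 1 := by
  by_cases hx : x ∈ s <;> simp [hx]

section General

variable {Ω α β γ : Type*} {m n m0 : MeasurableSpace Ω} {P : Measure Ω}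
  [MeasurableSpace α] [MeasurableSpace β] [MeasurableSpace γ]

theorem integral_mul_condExp_of_stronglyMeasurable_left (hm : m ≤ m0) [IsFiniteMeasure P]
    {c f : Ω → ℝ} (hc : StronglyMeasurable[m] c) (hcf : Integrable (c * f) P)
    (hf : Integrable f P) :
    ∫ ω, c ω * (P[f|m]) ω ∂P = ∫ ω, c ω * f ω ∂P :=
  (integral_congr_ae (condExp_mul_of_stronglyMeasurable_left hc hcf hf)).symm.trans
    (integral_condExp hm)

theorem memLp_top_of_abs_le [IsFiniteMeasure P] {f : Ω → ℝ} (hf : Measurable f) {C : ℝ}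
    (hC : ∀ ω, |f ω| ≤ C) : MemLp f ∞ P :=
  memLp_top_of_bound hf.aestronglyMeasurable C (.of_forall hC)

theorem map_withDensity_ofReal_apply {φ : Ω → α} (hφ : Measurable φ) {w : Ω → ℝ}
    (hw : 0 ≤ᵐ[P] w) (hwi : Integrable w P) {B : Set α} (hB : MeasurableSet B) :
    Measure.map φ (P.withDensity fun ω => ENNReal.ofReal (w ω)) B
      = ENNReal.ofReal (∫ ω in φ ⁻¹' B, w ω ∂P) := by
  rw [Measure.map_apply hφ hB, withDensity_apply _ (hφ hB),
    ofReal_integral_eq_lintegral_ofReal hwi.restrict (ae_restrict_of_ae hw)]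

theorem integral_map_withDensity_ofReal {φ : Ω → α} (hφ : Measurable φ) {w : Ω → ℝ}
    (hw : 0 ≤ᵐ[P] w) (hwm : AEMeasurable w P) {f : α → ℝ} (hf : Measurable f) :
    ∫ x, f x ∂Measure.map φ (P.withDensity fun ω => ENNReal.ofReal (w ω))
      = ∫ ω, f (φ ω) * w ω ∂P := by
  rw [integral_map hφ.aemeasurable hf.aestronglyMeasurable,
    integral_withDensity_eq_integral_toReal_smul₀ hwm.ennreal_ofReal
      (.of_forall fun _ => ENNReal.ofReal_lt_top)]
  refine integral_congr_ae (hw.mono fun ω hω => ?_)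
  dsimp only
  rw [ENNReal.toReal_ofReal hω, smul_eq_mul, mul_comm]

theorem integral_comp_mul_eq_of_setIntegral_prod_eq {φ : Ω → α × γ} (hφ : Measurable φ)
    {w₁ w₂ : Ω → ℝ} (hw₁ : 0 ≤ᵐ[P] w₁) (hw₂ : 0 ≤ᵐ[P] w₂)
    (hi₁ : Integrable w₁ P) (hi₂ : Integrable w₂ P)
    (hrect : ∀ s u, MeasurableSet s → MeasurableSet u →
      ∫ ω in φ ⁻¹' (s ×ˢ u), w₁ ω ∂P = ∫ ω in φ ⁻¹' (s ×ˢ u), w₂ ω ∂P)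
    {f : α × γ → ℝ} (hf : Measurable f) :
    ∫ ω, f (φ ω) * w₁ ω ∂P = ∫ ω, f (φ ω) * w₂ ω ∂P := by
  have := isFiniteMeasure_withDensity_ofReal hi₁.2
  have hν : Measure.map φ (P.withDensity fun ω => ENNReal.ofReal (w₁ ω))
      = Measure.map φ (P.withDensity fun ω => ENNReal.ofReal (w₂ ω)) :=
    Measure.ext_prod fun hs hu => by
      rw [map_withDensity_ofReal_apply hφ hw₁ hi₁ (hs.prod hu),
        map_withDensity_ofReal_apply hφ hw₂ hi₂ (hs.prod hu), hrect _ _ hs hu]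
  rw [← integral_map_withDensity_ofReal hφ hw₁ hi₁.aemeasurable hf, hν,
    integral_map_withDensity_ofReal hφ hw₂ hi₂.aemeasurable hf]

theorem integral_indicator_mul_eq_integral_of_condExp_eq_inv (hmn : m ≤ n) (hn : n ≤ m0)
    [IsFiniteMeasure P] {E : Set Ω} (hE : MeasurableSet[n] E) {Q : Ω → ℝ} (hQ : MemLp Q ∞ P)
    {p : Ω → ℝ} (hp : P[E.indicator 1|m] =ᵐ[P] p)
    (hpos : ∀ᵐ ω ∂P, 0 < p ω) (hbridge : ∀ᵐ ω ∂P, ω ∈ E → (P[Q|n]) ω = (p ω)⁻¹)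
    {h : Ω → ℝ} (hh : StronglyMeasurable[m] h) (hhb : MemLp h ∞ P) :
    ∫ ω, E.indicator Q ω * h ω ∂P = ∫ ω, h ω ∂P := by
  have hm : m ≤ m0 := hmn.trans hn
  have he : StronglyMeasurable[n] (E.indicator (1 : Ω → ℝ)) :=
    stronglyMeasurable_one.indicator hE
  have heb : MemLp (E.indicator (1 : Ω → ℝ)) ∞ P :=
    memLp_top_of_abs_le (he.mono hn).measurable (abs_indicator_one_le E)
  set p' := P[E.indicator (1 : Ω → ℝ)|m]
  have hweight : (fun ω => h ω * (p' ω)⁻¹ * E.indicator 1 ω)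
      =ᵐ[P] fun ω => E.indicator 1 ω * h ω * (P[Q|n]) ω := by
    filter_upwards [hbridge, hp] with ω hω hpω
    by_cases hωE : ω ∈ E
    · simp [hωE, hω hωE, hpω, mul_comm]
    · simp [hωE]
  have hweight_int : Integrable (fun ω => h ω * (p' ω)⁻¹ * E.indicator 1 ω) P :=
    ((((hQ.condExp le_top).mul (hhb.mul heb (r := ∞)) (r := ∞)).integrable le_top)).congr
      hweight.symm
  calc ∫ ω, E.indicator Q ω * h ω ∂P
      = ∫ ω, (E.indicator 1 ω * h ω) * Q ω ∂P := by
        refine integral_congr_ae (.of_forall fun ω => ?_)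
        by_cases hωE : ω ∈ E <;> simp [hωE, mul_comm]
    _ = ∫ ω, (E.indicator 1 ω * h ω) * (P[Q|n]) ω ∂P :=
        (integral_mul_condExp_of_stronglyMeasurable_left hn (he.mul (hh.mono hmn))
          ((hQ.mul (hhb.mul heb (r := ∞)) (r := ∞)).integrable le_top) (hQ.integrable le_top)).symm
    _ = ∫ ω, (h ω * (p' ω)⁻¹) * E.indicator 1 ω ∂P := (integral_congr_ae hweight).symm
    _ = ∫ ω, (h ω * (p' ω)⁻¹) * p' ω ∂P :=
        (integral_mul_condExp_of_stronglyMeasurable_left hm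
          (hh.mul stronglyMeasurable_condExp.measurable.inv.stronglyMeasurable) hweight_int
          (heb.integrable le_top)).symm
    _ = ∫ ω, h ω ∂P := by
        refine integral_congr_ae ?_
        filter_upwards [hp, hpos] with ω hpω hposω
        rw [hpω, mul_assoc, inv_mul_cancel₀ hposω.ne', mul_one]

theorem condExp_indicator_eq_of_eq_zero_or_eq_one (hm : m ≤ m0) [IsFiniteMeasure P] {A : Ω → ℝ}
    (hA : Measurable A) (hA01 : ∀ ω, A ω = 0 ∨ A ω = 1) {a : ℝ} (ha : a = 0 ∨ a = 1) :
    P[{ω | A ω = a}.indicator 1|m]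
      =ᵐ[P] fun ω => a * (P[A|m]) ω + (1 - a) * (1 - (P[A|m]) ω) := by
  have hAi : Integrable A P :=
    (memLp_top_of_abs_le hA (C := 1) fun ω => by rcases hA01 ω with h | h <;> simp [h]).integrable
      le_top
  rcases ha with rfl | rfl
  · have h1A : {ω | A ω = 0}.indicator (1 : Ω → ℝ) = (fun _ => 1) - A := by
      ext ω; rcases hA01 ω with h | h <;> simp [h]
    rw [h1A]
    filter_upwards [condExp_sub (integrable_const 1) hAi m] with ω hω
    rw [hω, Pi.sub_apply, condExp_const hm]
    ring
  · have h1A : {ω | A ω = 1}.indicator (1 : Ω → ℝ) = A := by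
      ext ω; rcases hA01 ω with h | h <;> simp [h]
    rw [h1A]
    exact .of_forall fun ω => by ring

end General

namespace CondIndepGiven

variable {Ω α β γ : Type*} {m n m0 : MeasurableSpace Ω} {P : Measure Ω} [IsFiniteMeasure P]
  [MeasurableSpace α] [MeasurableSpace β] [MeasurableSpace γ] {F : Ω → α} {G : Ω → β}

theorem integral_mul_mul_condExp (hm : m ≤ m0) (hCI : CondIndepGiven P m F G)
    (hF : Measurable F) (hG : Measurable G)
    {k : α → ℝ} (hk : Measurable k) (hkb : ∃ C, ∀ x, |k x| ≤ C)
    {g : β → ℝ} (hg : Measurable g) (hgb : ∃ C, ∀ y, |g y| ≤ C)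
    {c : Ω → ℝ} (hc : StronglyMeasurable[m] c) (hcm : MemLp c ∞ P) :
    ∫ ω, c ω * k (F ω) * (P[fun ω' => g (G ω')|m]) ω ∂P
      = ∫ ω, c ω * k (F ω) * g (G ω) ∂P := by
  obtain ⟨Ck, hCk⟩ := hkb
  obtain ⟨Cg, hCg⟩ := hgb
  have hkF : MemLp (fun ω => k (F ω)) ∞ P := memLp_top_of_abs_le (hk.comp hF) fun ω => hCk _
  have hgG : MemLp (fun ω => g (G ω)) ∞ P := memLp_top_of_abs_le (hg.comp hG) fun ω => hCg _
  have hh : MemLp (P[fun ω' => g (G ω')|m]) ∞ P := hgG.condExp le_top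
  calc ∫ ω, c ω * k (F ω) * (P[fun ω' => g (G ω')|m]) ω ∂P
      = ∫ ω, (c ω * (P[fun ω' => g (G ω')|m]) ω) * k (F ω) ∂P := by simp only [mul_right_comm]
    _ = ∫ ω, (c ω * (P[fun ω' => g (G ω')|m]) ω) * (P[fun ω' => k (F ω')|m]) ω ∂P :=
        (integral_mul_condExp_of_stronglyMeasurable_left hm (hc.mul stronglyMeasurable_condExp)
          ((hkF.mul (hh.mul hcm (r := ∞)) (r := ∞)).integrable le_top) (hkF.integrable le_top)).symm
    _ = ∫ ω, c ω * (P[fun ω' => k (F ω') * g (G ω')|m]) ω ∂P := by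
        refine integral_congr_ae ?_
        filter_upwards [hCI k g hk hg ⟨Ck, hCk⟩ ⟨Cg, hCg⟩] with ω hω
        rw [hω]; ring
    _ = ∫ ω, c ω * (k (F ω) * g (G ω)) ∂P :=
        integral_mul_condExp_of_stronglyMeasurable_left hm hc
          (((hgG.mul hkF (r := ∞)).mul hcm (r := ∞)).integrable le_top)
          ((hgG.mul hkF (r := ∞)).integrable le_top)
    _ = ∫ ω, c ω * k (F ω) * g (G ω) ∂P := by simp only [mul_assoc]

/-- The rectangle case `f = 1_s × 1_u` is `integral_mul_mul_condExp` with `c = 1_u ∘ X`; the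
general case follows because finite measures on `α × γ` are determined by rectangles. -/
theorem integral_comp_prod_mul_condExp (hm : m ≤ m0) (hCI : CondIndepGiven P m F G)
    (hF : Measurable F) (hG : Measurable G) {X : Ω → γ} (hX : Measurable[m] X)
    {f : α × γ → ℝ} (hf : Measurable f)
    {g : β → ℝ} (hg : Measurable g) (hg0 : 0 ≤ g) (hgb : ∃ C, ∀ y, |g y| ≤ C) :
    ∫ ω, f (F ω, X ω) * (P[fun ω' => g (G ω')|m]) ω ∂P = ∫ ω, f (F ω, X ω) * g (G ω) ∂P := by
  obtain ⟨Cg, hCg⟩ := hgb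
  have hFX : Measurable fun ω => (F ω, X ω) := hF.prodMk (hX.mono hm le_rfl)
  have hgG0 : 0 ≤ᵐ[P] fun ω => g (G ω) := .of_forall fun ω => hg0 _
  refine integral_comp_mul_eq_of_setIntegral_prod_eq hFX (condExp_nonneg hgG0) hgG0
    integrable_condExp ((memLp_top_of_abs_le (hg.comp hG) fun ω => hCg _).integrable le_top)
    (fun s u hs hu => ?_) hf
  have hrect : ∀ w : Ω → ℝ, ∫ ω in (fun ω => (F ω, X ω)) ⁻¹' (s ×ˢ u), w ω ∂P
      = ∫ ω, u.indicator 1 (X ω) * s.indicator 1 (F ω) * w ω ∂P := by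
    intro w
    rw [← integral_indicator (hFX (hs.prod hu))]
    refine integral_congr_ae (.of_forall fun ω => ?_)
    by_cases hsω : F ω ∈ s <;> by_cases huω : X ω ∈ u <;> simp [hsω, huω]
  rw [hrect, hrect]
  have hu1 : Measurable[m] fun ω => u.indicator (1 : γ → ℝ) (X ω) :=
    (measurable_one.indicator hu).comp hX
  exact integral_mul_mul_condExp hm hCI hF hG (measurable_one.indicator hs)
    ⟨1, abs_indicator_one_le s⟩ hg ⟨Cg, hCg⟩ hu1.stronglyMeasurable
    (memLp_top_of_abs_le (hu1.mono hm le_rfl) fun ω => abs_indicator_one_le u _)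

theorem integral_comp_prod_mul_eq_integral_of_condExp_eq_inv (hmn : m ≤ n) (hn : n ≤ m0)
    (hCI : CondIndepGiven P m F G) (hF : Measurable F)
    (hG : Measurable G) {X : Ω → γ} (hX : Measurable[m] X) {E : Set Ω} (hE : MeasurableSet[n] E)
    {Q : Ω → ℝ} (hQ : MemLp Q ∞ P) {p : Ω → ℝ} (hp : P[E.indicator 1|m] =ᵐ[P] p)
    (hpos : ∀ᵐ ω ∂P, 0 < p ω) (hbridge : ∀ᵐ ω ∂P, ω ∈ E → (P[Q|n]) ω = (p ω)⁻¹)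
    {f : α × γ → ℝ} (hf : Measurable f) (hfQ : ∀ ω, f (F ω, X ω) = E.indicator Q ω)
    {g : β → ℝ} (hg : Measurable g) (hg0 : 0 ≤ g) (hgb : ∃ C, ∀ y, |g y| ≤ C) :
    ∫ ω, f (F ω, X ω) * g (G ω) ∂P = ∫ ω, g (G ω) ∂P := by
  obtain ⟨Cg, hCg⟩ := hgb
  have hm : m ≤ m0 := hmn.trans hn
  rw [← hCI.integral_comp_prod_mul_condExp hm hF hG hX hf hg hg0 ⟨Cg, hCg⟩,
    ← integral_condExp hm (f := fun ω => g (G ω))]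
  simp only [hfQ]
  exact integral_indicator_mul_eq_integral_of_condExp_eq_inv hmn hn hE hQ hp hpos hbridge
    stronglyMeasurable_condExp ((memLp_top_of_abs_le (hg.comp hG) fun ω => hCg _).condExp le_top)

end CondIndepGiven

theorem pipw_identification_arm {Ω 𝓤 𝓧 𝓩 𝓦 : Type*} [MeasurableSpace Ω] [MeasurableSpace 𝓤]
    [MeasurableSpace 𝓧] [MeasurableSpace 𝓩] [MeasurableSpace 𝓦] {P : Measure Ω}
    [IsProbabilityMeasure P] {A Ta T : Ω → ℝ} {U : Ω → 𝓤} {X : Ω → 𝓧} {Z : Ω → 𝓩} {W : Ω → 𝓦}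
    (hA : Measurable A) (hTa : Measurable Ta) (hU : Measurable U) (hX : Measurable X)
    (hZ : Measurable Z) (hW : Measurable W) (hA01 : ∀ ω, A ω = 0 ∨ A ω = 1)
    {a : ℝ} (ha : a = 0 ∨ a = 1) (hTa_eq : ∀ ω, A ω = a → T ω = Ta ω) {π : Ω → ℝ}
    (hπver : π =ᵐ[P] P[A|MeasurableSpace.comap (fun ω => (U ω, X ω)) inferInstance])
    (hπpos : ∀ᵐ ω ∂P, 0 < π ω ∧ π ω < 1)
    {q : 𝓩 × ℝ × 𝓧 → ℝ} (hq : Measurable q) {C : ℝ} (hC : ∀ x, |q x| ≤ C)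
    (hbridge : (P[(fun ω => q (Z ω, A ω, X ω))|
        MeasurableSpace.comap (fun ω => (A ω, U ω, X ω)) inferInstance])
      =ᵐ[P] fun ω => (A ω * π ω + (1 - A ω) * (1 - π ω))⁻¹)
    (hCI : CondIndepGiven P (MeasurableSpace.comap (fun ω => (U ω, X ω)) inferInstance)
      (fun ω => (Z ω, A ω)) (fun ω => (W ω, Ta ω))) (t : ℝ) :
    (P {ω | t < Ta ω}).toReal
      = ∫ ω, (if A ω = a then (1 : ℝ) else 0) * q (Z ω, a, X ω) *
          (if t < T ω then (1 : ℝ) else 0) ∂P := by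
  have hmn : MeasurableSpace.comap (fun ω => (U ω, X ω)) inferInstance
      ≤ MeasurableSpace.comap (fun ω => (A ω, U ω, X ω)) inferInstance :=
    (measurable_snd.comp (comap_measurable (fun ω => (A ω, U ω, X ω)))).comap_le
  have key := hCI.integral_comp_prod_mul_eq_integral_of_condExp_eq_inv hmn
    (hA.prodMk (hU.prodMk hX)).comap_le (hZ.prodMk hA) (hW.prodMk hTa)
    (measurable_snd.comp (comap_measurable _)) (E := {ω | A ω = a})
    ((measurable_fst.comp (comap_measurable _)) (measurableSet_singleton a))
    (Q := fun ω => q (Z ω, A ω, X ω))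
    (memLp_top_of_abs_le (hq.comp (hZ.prodMk (hA.prodMk hX))) fun ω => hC _)
    (p := fun ω => a * π ω + (1 - a) * (1 - π ω))
    ((condExp_indicator_eq_of_eq_zero_or_eq_one (hU.prodMk hX).comap_le hA hA01 ha).trans
      (hπver.mono fun ω h => by dsimp only; rw [h]))
    (hπpos.mono fun ω h => by rcases ha with rfl | rfl <;> linarith [h.1, h.2])
    (hbridge.mono fun ω h hω => by simp only [h, show A ω = a from hω])
    (f := fun x => if x.1.2 = a then q (x.1.1, x.1.2, x.2) else 0)
    (Measurable.ite (measurableSet_eq_fun (by fun_prop) measurable_const) (by fun_prop)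
      measurable_const)
    (fun ω => by simp [Set.indicator_apply])
    (g := fun y => if t < y.2 then 1 else 0)
    (Measurable.ite (measurableSet_lt measurable_const measurable_snd) measurable_const
      measurable_const)
    (fun y => by dsimp only; split_ifs <;> norm_num) ⟨1, fun y => by split_ifs <;> norm_num⟩
  rw [← measureReal_def, ← integral_indicator_one (measurableSet_lt measurable_const hTa)]
  convert key.symm using 1
  · exact integral_congr_ae (.of_forall fun ω => by simp [Set.indicator_apply])
  · refine integral_congr_ae (.of_forall fun ω => ?_)
    by_cases hAa : A ω = a <;> simp [hAa, hTa_eq]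

theorem pipw_identification_latent_bridge_general
    {Ω 𝓤 𝓧 𝓩 𝓦 : Type*} [MeasurableSpace Ω]
    [MeasurableSpace 𝓤] [MeasurableSpace 𝓧]
    [MeasurableSpace 𝓩] [MeasurableSpace 𝓦]
    (P : Measure Ω) [IsProbabilityMeasure P]
    -- the random variables
    (A : Ω → ℝ) (T1 T0 : Ω → ℝ) (U : Ω → 𝓤) (X : Ω → 𝓧) (Z : Ω → 𝓩) (W : Ω → 𝓦)
    (hA : Measurable A) (hT1 : Measurable T1) (hT0 : Measurable T0)
    (hU : Measurable U) (hX : Measurable X) (hZ : Measurable Z) (hW : Measurable W)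
    (hA01 : ∀ ω, A ω = 0 ∨ A ω = 1)
    -- observed outcome (consistency)
    (T : Ω → ℝ) (hT : ∀ ω, T ω = A ω * T1 ω + (1 - A ω) * T0 ω)
    -- positivity for a version `π` of `P(A = 1 | σ(U, X))`
    (π : Ω → ℝ)
    (hπver : π =ᵐ[P] P[A|MeasurableSpace.comap (fun ω => (U ω, X ω)) inferInstance])
    (hπpos : ∀ᵐ ω ∂P, 0 < π ω ∧ π ω < 1)
    -- `q` is a bounded measurable function of `(Z, A, X)`
    (q : 𝓩 × ℝ × 𝓧 → ℝ) (hq : Measurable q) (hqbdd : ∃ C, ∀ x, |q x| ≤ C)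
    -- latent-level treatment bridge equation: `E[q(Z,A,X) | σ(A,U,X)] = 1/P(A|σ(U,X))` a.s.
    (hbridge : (P[(fun ω => q (Z ω, A ω, X ω))|
        MeasurableSpace.comap (fun ω => (A ω, U ω, X ω)) inferInstance])
      =ᵐ[P] fun ω => (A ω * π ω + (1 - A ω) * (1 - π ω))⁻¹)
    -- proxy independence: `(Z, A) ⟂ (W, T(a)) | σ(U, X)` for `a = 1, 0`
    (hproxy1 : CondIndepGiven P (MeasurableSpace.comap (fun ω => (U ω, X ω)) inferInstance)
      (fun ω => (Z ω, A ω)) (fun ω => (W ω, T1 ω)))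
    (hproxy0 : CondIndepGiven P (MeasurableSpace.comap (fun ω => (U ω, X ω)) inferInstance)
      (fun ω => (Z ω, A ω)) (fun ω => (W ω, T0 ω))) :
    ∀ a : ℝ, (a = 0 ∨ a = 1) → ∀ t : ℝ,
      (P {ω | t < (if a = 1 then T1 ω else T0 ω)}).toReal
        = ∫ ω, (if A ω = a then (1 : ℝ) else 0) * q (Z ω, a, X ω) *
            (if t < T ω then (1 : ℝ) else 0) ∂P := by
  intro a ha t
  obtain ⟨C, hC⟩ := hqbdd
  rcases ha with rfl | rfl
  · simpa using pipw_identification_arm hA hT0 hU hX hZ hW hA01 (.inl rfl)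
      (fun ω h => by simp [hT, h]) hπver hπpos hq hC hbridge hproxy0 t
  · simpa using pipw_identification_arm hA hT1 hU hX hZ hW hA01 (.inr rfl)
      (fun ω h => by simp [hT, h]) hπver hπpos hq hC hbridge hproxy1 t

/-- If `q` solves the latent-level treatment bridge equation
`E[q(Z,A,X) | σ(A,U,X)] = 1/P(A|σ(U,X))` a.s. and proxy independence holds, then for every
`a ∈ {0,1}` and `t ∈ ℝ`, `P(T(a) > t) = E[ 1{A = a} ⬝ q(Z, a, X) ⬝ 1{T > t} ]`. -/
theorem pipw_identification_latent_bridge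
    {Ω 𝓤 𝓧 𝓩 𝓦 : Type*} [MeasurableSpace Ω]
    [MeasurableSpace 𝓤] [StandardBorelSpace 𝓤] [MeasurableSpace 𝓧] [StandardBorelSpace 𝓧]
    [MeasurableSpace 𝓩] [StandardBorelSpace 𝓩] [MeasurableSpace 𝓦] [StandardBorelSpace 𝓦]
    (P : Measure Ω) [IsProbabilityMeasure P]
    -- the random variables
    (A : Ω → ℝ) (T1 T0 : Ω → ℝ) (U : Ω → 𝓤) (X : Ω → 𝓧) (Z : Ω → 𝓩) (W : Ω → 𝓦)
    (hA : Measurable A) (hT1 : Measurable T1) (hT0 : Measurable T0)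
    (hU : Measurable U) (hX : Measurable X) (hZ : Measurable Z) (hW : Measurable W)
    (hA01 : ∀ ω, A ω = 0 ∨ A ω = 1)
    -- observed outcome (consistency)
    (T : Ω → ℝ) (hT : ∀ ω, T ω = A ω * T1 ω + (1 - A ω) * T0 ω)
    -- positivity for a version `π` of `P(A = 1 | σ(U, X))`
    (π : Ω → ℝ)
    (hπver : π =ᵐ[P] P[A|MeasurableSpace.comap (fun ω => (U ω, X ω)) inferInstance])
    (hπpos : ∀ᵐ ω ∂P, 0 < π ω ∧ π ω < 1)
    -- `q` is a bounded measurable function of `(Z, A, X)`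
    (q : 𝓩 × ℝ × 𝓧 → ℝ) (hq : Measurable q) (hqbdd : ∃ C, ∀ x, |q x| ≤ C)
    -- latent-level treatment bridge equation: `E[q(Z,A,X) | σ(A,U,X)] = 1/P(A|σ(U,X))` a.s.
    (hbridge : (P[(fun ω => q (Z ω, A ω, X ω))|
        MeasurableSpace.comap (fun ω => (A ω, U ω, X ω)) inferInstance])
      =ᵐ[P] fun ω => (A ω * π ω + (1 - A ω) * (1 - π ω))⁻¹)
    -- proxy independence: `(Z, A) ⟂ (W, T(a)) | σ(U, X)` for `a = 1, 0`
    (hproxy1 : CondIndepGiven P (MeasurableSpace.comap (fun ω => (U ω, X ω)) inferInstance)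
      (fun ω => (Z ω, A ω)) (fun ω => (W ω, T1 ω)))
    (hproxy0 : CondIndepGiven P (MeasurableSpace.comap (fun ω => (U ω, X ω)) inferInstance)
      (fun ω => (Z ω, A ω)) (fun ω => (W ω, T0 ω))) :
    ∀ a : ℝ, (a = 0 ∨ a = 1) → ∀ t : ℝ,
      (P {ω | t < (if a = 1 then T1 ω else T0 ω)}).toReal
        = ∫ ω, (if A ω = a then (1 : ℝ) else 0) * q (Z ω, a, X ω) *
            (if t < T ω then (1 : ℝ) else 0) ∂P :=
  pipw_identification_latent_bridge_general P A T1 T0 U X Z W hA hT1 hT0 hU hX hZ hW hA01 T hT π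
    hπver hπpos q hq hqbdd hbridge hproxy1 hproxy0
end

section
/- Suppose q satisfies the latent-level treatment bridge equation E[q(Z,A,X) | σ(A,U,X)] = 1/P(A|σ(U,X)) a.s. Then for every a ∈ {0,1} and every bounded σ(U,X)-measurable random variable F, E[ 1{A=a} · q(Z,a,X) · F ] = E[F]. (Inverse-weighting identity used repeatedly in the identification proofs.) -/
open MeasureTheory ProbabilityTheory

/-!
Write `φ = 1{A = a}`. Conditioning on `σ(A, U, X)`, with respect to which `φ · F` is measurable,
replaces `q(Z, A, X)` by its conditional expectation, which the bridge equation gives as the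
inverse propensity `1 / P(A = a | σ(U, X))` on `{A = a}`. Conditioning next on `σ(U, X)`, with
respect to which `F` and the propensity are measurable, replaces `φ` by that same propensity, and
the two cancel, leaving `E[F]`.
-/

/-- The probability of `a ∈ {0, 1}` under a Bernoulli law with parameter `p`; the
`P(A|σ(U,X))` of the bridge equation is `bernoulliWeight A π`. -/
def bernoulliWeight (a p : ℝ) : ℝ := a * p + (1 - a) * (1 - p)

theorem bernoulliWeight_pos {a p : ℝ} (ha : a = 0 ∨ a = 1) (hp₀ : 0 < p) (hp₁ : p < 1) :
    0 < bernoulliWeight a p := by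
  rcases ha with rfl | rfl <;> simp [bernoulliWeight] <;> linarith

theorem ite_eq_bernoulliWeight {a x : ℝ} (ha : a = 0 ∨ a = 1) (hx : x = 0 ∨ x = 1) :
    (if x = a then 1 else 0) = bernoulliWeight a x := by
  rcases ha with rfl | rfl <;> rcases hx with rfl | rfl <;> norm_num [bernoulliWeight]

section CondExp

variable {Ω : Type*} {m m₁ m₂ m₀ : MeasurableSpace Ω} {μ : Measure Ω}

theorem integral_mul_condExp_of_stronglyMeasurable_left_s3 (hm : m ≤ m₀) [SigmaFinite (μ.trim hm)]
    {f g : Ω → ℝ} (hf : StronglyMeasurable[m] f) (hfg : Integrable (f * g) μ)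
    (hg : Integrable g μ) :
    ∫ ω, (f * μ[g|m]) ω ∂μ = ∫ ω, (f * g) ω ∂μ :=
  (integral_congr_ae (condExp_mul_of_stronglyMeasurable_left hf hfg hg)).symm.trans
    (integral_condExp hm)

theorem integral_mul_inv_condExp_mul (hm : m ≤ m₀) [SigmaFinite (μ.trim hm)] {f g : Ω → ℝ}
    (hf : StronglyMeasurable[m] f) (hg : Integrable g μ) (hne : ∀ᵐ ω ∂μ, μ[g|m] ω ≠ 0)
    (hint : Integrable (f * (μ[g|m])⁻¹ * g) μ) :
    ∫ ω, (f * (μ[g|m])⁻¹ * g) ω ∂μ = ∫ ω, f ω ∂μ := by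
  have hw : StronglyMeasurable[m] (f * (μ[g|m])⁻¹) :=
    (hf.measurable.mul stronglyMeasurable_condExp.measurable.inv).stronglyMeasurable
  rw [← integral_mul_condExp_of_stronglyMeasurable_left_s3 hm hw hint hg]
  refine integral_congr_ae ?_
  filter_upwards [hne] with ω h
  simp only [Pi.mul_apply, Pi.inv_apply, inv_mul_cancel_right₀ h]

theorem integral_mul_mul_eq_integral_of_condExp_eq_inv [IsFiniteMeasure μ] (hm₁₂ : m₁ ≤ m₂)
    (hm₂ : m₂ ≤ m₀) {φ F Q w : Ω → ℝ} (hφ : StronglyMeasurable[m₂] φ)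
    (hF : StronglyMeasurable[m₁] F) (C : ℝ)
    (hφF : ∀ᵐ ω ∂μ, ‖φ ω * F ω‖ ≤ C) (hφ_int : Integrable φ μ) (hQ : Integrable Q μ)
    (hφ_cond : μ[φ|m₁] =ᵐ[μ] w) (hw : ∀ᵐ ω ∂μ, w ω ≠ 0)
    (hQ_cond : φ * μ[Q|m₂] =ᵐ[μ] φ * w⁻¹) :
    ∫ ω, (φ * F * Q) ω ∂μ = ∫ ω, F ω ∂μ := by
  have hφF_meas : StronglyMeasurable[m₂] (φ * F) := hφ.mul (hF.mono hm₁₂)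
  have hφF_ae : AEStronglyMeasurable (φ * F) μ := (hφF_meas.mono hm₂).aestronglyMeasurable
  have h_weighted : φ * F * μ[Q|m₂] =ᵐ[μ] F * (μ[φ|m₁])⁻¹ * φ := by
    filter_upwards [hQ_cond, hφ_cond] with ω hQω hφω
    have hQω' : φ ω * μ[Q|m₂] ω = φ ω * (w ω)⁻¹ := hQω
    simp only [Pi.mul_apply, Pi.inv_apply, hφω]
    linear_combination F ω * hQω'
  have h_int : Integrable (φ * F * μ[Q|m₂]) μ := integrable_condExp.bdd_mul hφF_ae hφF
  calc ∫ ω, (φ * F * Q) ω ∂μ = ∫ ω, (φ * F * μ[Q|m₂]) ω ∂μ :=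
        (integral_mul_condExp_of_stronglyMeasurable_left_s3 hm₂ hφF_meas
          (hQ.bdd_mul hφF_ae hφF) hQ).symm
    _ = ∫ ω, (F * (μ[φ|m₁])⁻¹ * φ) ω ∂μ := integral_congr_ae h_weighted
    _ = ∫ ω, F ω ∂μ :=
        integral_mul_inv_condExp_mul (hm₁₂.trans hm₂) hF hφ_int
          (by filter_upwards [hφ_cond, hw] with ω h hwω; rwa [h]) (h_int.congr h_weighted)

theorem condExp_bernoulliWeight [IsFiniteMeasure μ] (hm : m ≤ m₀) {f : Ω → ℝ}
    (hf : Integrable f μ) (a : ℝ) :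
    μ[fun ω => bernoulliWeight a (f ω)|m] =ᵐ[μ] fun ω => bernoulliWeight a (μ[f|m] ω) := by
  have h_affine : (fun ω => bernoulliWeight a (f ω)) = (fun _ => 1 - a) + (2 * a - 1) • f := by
    funext ω
    simp only [bernoulliWeight, Pi.add_apply, Pi.smul_apply, smul_eq_mul]
    ring
  rw [h_affine]
  filter_upwards [condExp_add (integrable_const _) (hf.smul (2 * a - 1)) m,
    condExp_smul (2 * a - 1) f m] with ω h_add h_smul
  rw [h_add, Pi.add_apply, h_smul, condExp_const hm, Pi.smul_apply, smul_eq_mul, bernoulliWeight]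
  ring

theorem condExp_ite_eq_bernoulliWeight [IsFiniteMeasure μ] (hm : m ≤ m₀) {A : Ω → ℝ}
    (hA : Measurable A) (hA01 : ∀ ω, A ω = 0 ∨ A ω = 1) {a : ℝ} (ha : a = 0 ∨ a = 1) :
    μ[fun ω => if A ω = a then 1 else 0|m] =ᵐ[μ] fun ω => bernoulliWeight a (μ[A|m] ω) := by
  have hA_int : Integrable A μ := .of_bound hA.aestronglyMeasurable 1
    (ae_of_all _ fun ω => by rcases hA01 ω with h | h <;> simp [h])
  simpa only [ite_eq_bernoulliWeight ha (hA01 _)] using condExp_bernoulliWeight hm hA_int a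

end CondExp

theorem proximal_inverse_weighting_identity_general
    {Ω 𝓤 𝓧 𝓩 : Type*} [MeasurableSpace Ω]
    [MeasurableSpace 𝓤] [MeasurableSpace 𝓧]
    [MeasurableSpace 𝓩]
    (P : Measure Ω) [IsProbabilityMeasure P]
    -- the random variables
    (A : Ω → ℝ) (U : Ω → 𝓤) (X : Ω → 𝓧) (Z : Ω → 𝓩)
    (hA : Measurable A) (hU : Measurable U) (hX : Measurable X) (hZ : Measurable Z)
    (hA01 : ∀ ω, A ω = 0 ∨ A ω = 1)
    -- positivity for a version `π` of `P(A = 1 | σ(U, X))`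
    (π : Ω → ℝ)
    (hπver : π =ᵐ[P] P[A|MeasurableSpace.comap (fun ω => (U ω, X ω)) inferInstance])
    (hπpos : ∀ᵐ ω ∂P, 0 < π ω ∧ π ω < 1)
    -- `q` is a bounded measurable function of `(Z, A, X)`
    (q : 𝓩 × ℝ × 𝓧 → ℝ) (hq : Measurable q) (hqbdd : ∃ C, ∀ x, |q x| ≤ C)
    -- latent-level treatment bridge equation: `E[q(Z,A,X) | σ(A,U,X)] = 1/P(A|σ(U,X))` a.s.
    (hbridge : (P[(fun ω => q (Z ω, A ω, X ω))|
        MeasurableSpace.comap (fun ω => (A ω, U ω, X ω)) inferInstance])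
      =ᵐ[P] fun ω => (A ω * π ω + (1 - A ω) * (1 - π ω))⁻¹) :
    ∀ a : ℝ, (a = 0 ∨ a = 1) →
      ∀ F : Ω → ℝ,
        Measurable[MeasurableSpace.comap (fun ω => (U ω, X ω)) inferInstance] F →
        (∃ C, ∀ ω, |F ω| ≤ C) →
        ∫ ω, (if A ω = a then (1 : ℝ) else 0) * q (Z ω, a, X ω) * F ω ∂P = ∫ ω, F ω ∂P := by
  intro a ha F hF ⟨CF, hCF⟩
  obtain ⟨Cq, hCq⟩ := hqbdd
  have hmG := (hA.prodMk (hU.prodMk hX)).comap_le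
  have hmH := (hU.prodMk hX).comap_le
  have hmHG : MeasurableSpace.comap (fun ω => (U ω, X ω)) inferInstance ≤
      MeasurableSpace.comap (fun ω => (A ω, U ω, X ω)) inferInstance :=
    (measurable_snd.comp (comap_measurable fun ω => (A ω, U ω, X ω))).comap_le
  set φ : Ω → ℝ := fun ω => if A ω = a then 1 else 0
  have hφ_meas : Measurable[MeasurableSpace.comap (fun ω => (A ω, U ω, X ω)) inferInstance] φ :=
    Measurable.ite
      ((measurable_fst.comp (comap_measurable (β := ℝ × 𝓤 × 𝓧) fun ω => (A ω, U ω, X ω)))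
        (measurableSet_singleton a)) measurable_const measurable_const
  have hφF : ∀ ω, ‖φ ω * F ω‖ ≤ CF := fun ω => by
    have := (abs_nonneg _).trans (hCF ω)
    by_cases h : A ω = a <;> simp [φ, h, hCF ω, this]
  have intφ : Integrable φ P := .of_bound (hφ_meas.mono hmG le_rfl).aestronglyMeasurable 1
    (ae_of_all _ fun ω => by by_cases h : A ω = a <;> simp [φ, h])
  have intQ : Integrable (fun ω => q (Z ω, A ω, X ω)) P :=
    .of_bound (hq.comp (hZ.prodMk (hA.prodMk hX))).aestronglyMeasurable Cq
      (ae_of_all _ fun _ => hCq _)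
  refine (integral_congr_ae (ae_of_all _ fun ω => ?_)).trans
    (integral_mul_mul_eq_integral_of_condExp_eq_inv hmHG hmG hφ_meas.stronglyMeasurable
      hF.stronglyMeasurable CF (ae_of_all _ hφF) intφ intQ (w := fun ω => bernoulliWeight a (π ω))
      ?_ ?_ ?_)
  · by_cases hAa : A ω = a <;> simp [φ, hAa, mul_comm]
  · filter_upwards [condExp_ite_eq_bernoulliWeight hmH hA hA01 ha, hπver] with ω h h_ver
    rw [h, h_ver]
  · filter_upwards [hπpos] with ω hπ
    exact (bernoulliWeight_pos ha hπ.1 hπ.2).ne'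
  · filter_upwards [hbridge] with ω h_bridge
    by_cases hAa : A ω = a
    · simp only [Pi.mul_apply, Pi.inv_apply, φ, hAa, if_true, h_bridge, bernoulliWeight]
    · simp [φ, hAa]

/-- **Inverse-weighting identity used repeatedly in the identification proofs.**
If `q` solves the latent-level treatment bridge equation
`E[q(Z,A,X) | σ(A,U,X)] = 1/P(A|σ(U,X))` a.s., then for every `a ∈ {0,1}` and every bounded
`σ(U,X)`-measurable random variable `F`, `E[ 1{A = a} ⬝ q(Z, a, X) ⬝ F ] = E[F]`. -/
theorem proximal_inverse_weighting_identity
    {Ω 𝓤 𝓧 𝓩 : Type*} [MeasurableSpace Ω]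
    [MeasurableSpace 𝓤] [StandardBorelSpace 𝓤] [MeasurableSpace 𝓧] [StandardBorelSpace 𝓧]
    [MeasurableSpace 𝓩] [StandardBorelSpace 𝓩]
    (P : Measure Ω) [IsProbabilityMeasure P]
    -- the random variables
    (A : Ω → ℝ) (U : Ω → 𝓤) (X : Ω → 𝓧) (Z : Ω → 𝓩)
    (hA : Measurable A) (hU : Measurable U) (hX : Measurable X) (hZ : Measurable Z)
    (hA01 : ∀ ω, A ω = 0 ∨ A ω = 1)
    -- positivity for a version `π` of `P(A = 1 | σ(U, X))`
    (π : Ω → ℝ)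
    (hπver : π =ᵐ[P] P[A|MeasurableSpace.comap (fun ω => (U ω, X ω)) inferInstance])
    (hπpos : ∀ᵐ ω ∂P, 0 < π ω ∧ π ω < 1)
    -- `q` is a bounded measurable function of `(Z, A, X)`
    (q : 𝓩 × ℝ × 𝓧 → ℝ) (hq : Measurable q) (hqbdd : ∃ C, ∀ x, |q x| ≤ C)
    -- latent-level treatment bridge equation: `E[q(Z,A,X) | σ(A,U,X)] = 1/P(A|σ(U,X))` a.s.
    (hbridge : (P[(fun ω => q (Z ω, A ω, X ω))|
        MeasurableSpace.comap (fun ω => (A ω, U ω, X ω)) inferInstance])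
      =ᵐ[P] fun ω => (A ω * π ω + (1 - A ω) * (1 - π ω))⁻¹) :
    ∀ a : ℝ, (a = 0 ∨ a = 1) →
      ∀ F : Ω → ℝ,
        Measurable[MeasurableSpace.comap (fun ω => (U ω, X ω)) inferInstance] F →
        (∃ C, ∀ ω, |F ω| ≤ C) →
        ∫ ω, (if A ω = a then (1 : ℝ) else 0) * q (Z ω, a, X ω) * F ω ∂P = ∫ ω, F ω ∂P :=
  proximal_inverse_weighting_identity_general P A U X Z hA hU hX hZ hA01 π hπver hπpos q hq hqbdd
    hbridge
end

section
/- Suppose h satisfies the observed-level outcome bridge equation (for every t ∈ ℝ, E[h(t,W,A,X) | σ(A,Z,X)] = E[1{T>t} | σ(A,Z,X)] a.s.), the outcome completeness condition holds, and Z is conditionally independent of the pair (W,T) given σ(A,U,X). Then h also satisfies the latent-level outcome bridge equation: for every t ∈ ℝ, E[h(t,W,A,X) | σ(A,U,X)] = E[1{T>t} | σ(A,U,X)] a.s. (Key transfer step in the proof of Proposition 1, part 2.) -/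
/-!
Put `g = h(t,W,A,X) - 1{T > t}` and `Y = E[g | A,U,X]`. Because `Z` and `(W,T)` are
conditionally independent given `(A,U,X)`, the residual `φ(Z) - E[φ(Z) | A,U,X]` of any bounded
`φ` is orthogonal to every bounded function of `(W,T,A,X)`, in particular to `g`; together with the
tower property this shows that `g - Y` is orthogonal to every bounded function of `(Z,A,X)`.
Hence `E[Y | Z,A,X] = E[g | Z,A,X]`, which vanishes by the observed bridge equation, and
completeness forces `Y = 0`.
-/

open MeasureTheory ProbabilityTheory

open scoped ENNReal

section ConditionalExpectation

variable {Ω : Type*} {m mΩ : MeasurableSpace Ω} {P : Measure Ω}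

lemma comap_prodMk_left_comm {α β γ : Type*} [MeasurableSpace α] [MeasurableSpace β]
    [MeasurableSpace γ] (F₁ : Ω → α) (F₂ : Ω → β) (F₃ : Ω → γ) :
    MeasurableSpace.comap (fun ω => (F₁ ω, F₂ ω, F₃ ω)) inferInstance =
      MeasurableSpace.comap (fun ω => (F₂ ω, F₁ ω, F₃ ω)) inferInstance :=
  le_antisymm
    (Measurable.comap_le <| (show Measurable fun p : β × α × γ => (p.2.1, p.1, p.2.2) by
      fun_prop).comp (comap_measurable _))
    (Measurable.comap_le <| (show Measurable fun p : α × β × γ => (p.2.1, p.1, p.2.2) by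
      fun_prop).comp (comap_measurable _))

lemma MeasureTheory.MemLp.mul_top {f g : Ω → ℝ} (hf : MemLp f ∞ P) (hg : MemLp g ∞ P) :
    MemLp (fun ω => f ω * g ω) ∞ P :=
  hg.mul' hf

lemma memLp_top_comp {α : Type*} [MeasurableSpace α] {φ : α → ℝ} (hφ : Measurable φ)
    (hφb : ∃ C, ∀ x, |φ x| ≤ C) {Z : Ω → α} (hZ : Measurable Z) :
    MemLp (fun ω => φ (Z ω)) ∞ P := by
  obtain ⟨C, hC⟩ := hφb
  exact memLp_top_of_bound (hφ.comp hZ).aestronglyMeasurable C (ae_of_all _ fun ω => hC (Z ω))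

lemma exists_abs_indicator_one_le {α : Type*} (s : Set α) :
    ∃ C, ∀ x, |s.indicator (1 : α → ℝ) x| ≤ C :=
  ⟨1, fun x => by by_cases hx : x ∈ s <;> simp [hx]⟩

lemma integral_mul_condExp [IsFiniteMeasure P] (hm : m ≤ mΩ) {f g : Ω → ℝ}
    (hf : StronglyMeasurable[m] f) (hfb : MemLp f ∞ P) (hg : Integrable g P) :
    ∫ ω, f ω * P[g|m] ω ∂P = ∫ ω, f ω * g ω ∂P := by
  rw [← integral_condExp hm (f := fun ω => f ω * g ω)]
  exact integral_congr_ae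
    (condExp_mul_of_stronglyMeasurable_left hf (hg.mul_of_top_right hfb) hg).symm

lemma integral_mul_eq_zero_of_condExp_ae_eq_zero [IsFiniteMeasure P] (hm : m ≤ mΩ) {f g : Ω → ℝ}
    (hf : StronglyMeasurable[m] f) (hfb : MemLp f ∞ P) (hg : Integrable g P)
    (hg0 : P[g|m] =ᵐ[P] 0) :
    ∫ ω, f ω * g ω ∂P = 0 := by
  rw [← integral_mul_condExp hm hf hfb hg]
  calc ∫ ω, f ω * P[g|m] ω ∂P = ∫ _, (0 : ℝ) ∂P :=
        integral_congr_ae (by filter_upwards [hg0] with ω hω; simp [hω])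
    _ = 0 := integral_zero _ _

lemma condExp_sub_condExp_ae_eq_zero [IsFiniteMeasure P] (hm : m ≤ mΩ) {f : Ω → ℝ}
    (hf : Integrable f P) :
    P[f - P[f|m]|m] =ᵐ[P] 0 := by
  refine (condExp_sub hf integrable_condExp m).trans (Filter.EventuallyEq.of_eq ?_)
  rw [condExp_of_stronglyMeasurable hm stronglyMeasurable_condExp integrable_condExp, sub_self]

lemma condExp_comap_prodMk_ae_eq_zero {α β : Type*} [MeasurableSpace α] [MeasurableSpace β]
    [IsFiniteMeasure P] {F₁ : Ω → α} {F₂ : Ω → β} (hF₁ : Measurable F₁) (hF₂ : Measurable F₂)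
    {f : Ω → ℝ} (hf : Integrable f P)
    (hrect : ∀ s₁ s₂, MeasurableSet s₁ → MeasurableSet s₂ →
      ∫ ω, s₁.indicator 1 (F₁ ω) * s₂.indicator 1 (F₂ ω) * f ω ∂P = 0) :
    P[f|MeasurableSpace.comap (fun ω => (F₁ ω, F₂ ω)) inferInstance] =ᵐ[P] 0 := by
  set F : Ω → α × β := fun ω => (F₁ ω, F₂ ω)
  have hF : Measurable F := hF₁.prodMk hF₂
  have hrect' : ∀ s₁ s₂, MeasurableSet s₁ → MeasurableSet s₂ →
      ∫ ω in F ⁻¹' (s₁ ×ˢ s₂), f ω ∂P = 0 := by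
    intro s₁ s₂ hs₁ hs₂
    rw [← integral_indicator (hF (hs₁.prod hs₂)), ← hrect s₁ s₂ hs₁ hs₂]
    congr 1 with ω
    by_cases h₁ : F₁ ω ∈ s₁ <;> by_cases h₂ : F₂ ω ∈ s₂ <;> simp [F, h₁, h₂]
  have htotal : ∫ ω, f ω ∂P = 0 := by
    simpa using hrect' Set.univ Set.univ .univ .univ
  have hset : ∀ D, MeasurableSet D → ∫ ω in F ⁻¹' D, f ω ∂P = 0 := by
    refine fun D hD => MeasurableSpace.induction_on_inter generateFrom_prod.symm isPiSystem_prod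
      ?_ ?_ ?_ ?_ D hD
    · simp
    · rintro _ ⟨s₁, hs₁, s₂, hs₂, rfl⟩
      exact hrect' s₁ s₂ hs₁ hs₂
    · intro D hD hD0
      rw [Set.preimage_compl, setIntegral_compl (hF hD) hf, htotal, hD0, sub_zero]
    · intro D hdisj hD hD0
      rw [Set.preimage_iUnion, integral_iUnion (fun i => hF (hD i))
        (fun i j hij => (hdisj hij).preimage F) hf.integrableOn]
      simp [hD0]
  refine (ae_eq_condExp_of_forall_setIntegral_eq hF.comap_le hf
    (fun _ _ _ => (integrable_zero _ _ _).integrableOn) ?_ aestronglyMeasurable_zero).symm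
  rintro _ ⟨D, hD, rfl⟩ _
  simp [hset D hD]

lemma exists_bounded_ae_eq_of_ae_abs_le {Y : Ω → ℝ} (hY : Measurable[m] Y) {C : ℝ}
    (hYC : ∀ᵐ ω ∂P, |Y ω| ≤ C) :
    ∃ Y' : Ω → ℝ, Measurable[m] Y' ∧ (∃ C, ∀ ω, |Y' ω| ≤ C) ∧ Y' =ᵐ[P] Y := by
  refine ⟨fun ω => max (-C) (min C (Y ω)), measurable_const.max (measurable_const.min hY),
    ⟨|C|, fun ω => abs_le.2 ⟨?_, ?_⟩⟩, ?_⟩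
  · exact (neg_le_neg (le_abs_self C)).trans (le_max_left _ _)
  · exact max_le (neg_le_abs C) ((min_le_left _ _).trans (le_abs_self C))
  · filter_upwards [hYC] with ω hω
    obtain ⟨hl, hr⟩ := abs_le.1 hω
    simp [min_eq_right hr, max_eq_right hl]

end ConditionalExpectation

namespace CondIndepGiven

variable {Ω α β γ : Type*} {m mΩ : MeasurableSpace Ω} [MeasurableSpace α] [MeasurableSpace β]
  [MeasurableSpace γ] {P : Measure Ω} [IsFiniteMeasure P] {Z : Ω → α} {G : Ω → β}

lemma integral_mul_sub_condExp_eq_zero (hZG : CondIndepGiven P m Z G) (hm : m ≤ mΩ)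
    (hZ : Measurable Z) (hG : Measurable G) {φ : α → ℝ} {χ : β → ℝ} (hφ : Measurable φ)
    (hχ : Measurable χ) (hφb : ∃ C, ∀ x, |φ x| ≤ C) (hχb : ∃ C, ∀ y, |χ y| ≤ C)
    {ψ : Ω → ℝ} (hψ : StronglyMeasurable[m] ψ) (hψb : MemLp ψ ∞ P) :
    ∫ ω, ψ ω * χ (G ω) * (φ (Z ω) - P[fun ω' => φ (Z ω')|m] ω) ∂P = 0 := by
  set F := P[fun ω' => φ (Z ω')|m]
  have hφZ : MemLp (fun ω => φ (Z ω)) ∞ P := memLp_top_comp hφ hφb hZ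
  have hχG : MemLp (fun ω => χ (G ω)) ∞ P := memLp_top_comp hχ hχb hG
  have hF : MemLp F ∞ P := hφZ.condExp le_top
  calc ∫ ω, ψ ω * χ (G ω) * (φ (Z ω) - F ω) ∂P
      = ∫ ω, ψ ω * (φ (Z ω) * χ (G ω)) ∂P - ∫ ω, (ψ ω * F ω) * χ (G ω) ∂P := by
        rw [← integral_sub ((hψb.mul_top (hφZ.mul_top hχG)).integrable le_top)
          (((hψb.mul_top hF).mul_top hχG).integrable le_top)]
        congr 1 with ω
        ring
    _ = ∫ ω, ψ ω * P[fun ω' => φ (Z ω') * χ (G ω')|m] ω ∂P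
          - ∫ ω, (ψ ω * F ω) * P[fun ω' => χ (G ω')|m] ω ∂P := by
        rw [integral_mul_condExp hm hψ hψb ((hφZ.mul_top hχG).integrable le_top),
          integral_mul_condExp (f := fun ω => ψ ω * F ω) hm (hψ.mul stronglyMeasurable_condExp)
            (hψb.mul_top hF) (hχG.integrable le_top)]
    _ = 0 := by
        rw [sub_eq_zero]
        refine integral_congr_ae ?_
        filter_upwards [hZG φ χ hφ hχ hφb hχb] with ω hω
        rw [hω, mul_assoc]

lemma condExp_comp_sub_condExp_ae_eq_zero (hZG : CondIndepGiven P m Z G) (hm : m ≤ mΩ)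
    (hZ : Measurable Z) (hG : Measurable G) {R : Ω → γ} (hR : Measurable[m] R) {φ : α → ℝ}
    (hφ : Measurable φ) (hφb : ∃ C, ∀ x, |φ x| ≤ C) :
    P[fun ω => φ (Z ω) - P[fun ω' => φ (Z ω')|m] ω|
      MeasurableSpace.comap (fun ω => (G ω, R ω)) inferInstance] =ᵐ[P] 0 := by
  have hφZ : MemLp (fun ω => φ (Z ω)) ∞ P := memLp_top_comp hφ hφb hZ
  refine condExp_comap_prodMk_ae_eq_zero hG (hR.mono hm le_rfl)
    ((hφZ.sub (hφZ.condExp le_top)).integrable le_top) fun s₁ s₂ hs₁ hs₂ => ?_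
  rw [← hZG.integral_mul_sub_condExp_eq_zero hm hZ hG hφ (measurable_one.indicator hs₁) hφb
    (exists_abs_indicator_one_le s₁) ((measurable_one.indicator hs₂).comp hR).stronglyMeasurable
    (memLp_top_comp (measurable_one.indicator hs₂) (exists_abs_indicator_one_le s₂)
      (hR.mono hm le_rfl))]
  congr 1 with ω
  simp only [Function.comp_apply]
  ring

lemma integral_mul_mul_sub_condExp_eq_zero (hZG : CondIndepGiven P m Z G) (hm : m ≤ mΩ)
    (hZ : Measurable Z) (hG : Measurable G) {R : Ω → γ} (hR : Measurable[m] R) {g : Ω → ℝ}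
    (hg : StronglyMeasurable[MeasurableSpace.comap (fun ω => (G ω, R ω)) inferInstance] g)
    (hgb : MemLp g ∞ P) {φ : α → ℝ} {χ : γ → ℝ} (hφ : Measurable φ) (hχ : Measurable χ)
    (hφb : ∃ C, ∀ x, |φ x| ≤ C) (hχb : ∃ C, ∀ y, |χ y| ≤ C) :
    ∫ ω, φ (Z ω) * χ (R ω) * (g ω - P[g|m] ω) ∂P = 0 := by
  set Y := P[g|m]
  set φZ := fun ω => φ (Z ω)
  set F := P[φZ|m]
  set ψ := fun ω => χ (R ω)
  have hY : MemLp Y ∞ P := hgb.condExp le_top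
  have hφZ : MemLp φZ ∞ P := memLp_top_comp hφ hφb hZ
  have hF : MemLp F ∞ P := hφZ.condExp le_top
  have hψb : MemLp ψ ∞ P := memLp_top_comp hχ hχb (hR.mono hm le_rfl)
  have hψ : StronglyMeasurable[m] ψ := (hχ.comp hR).stronglyMeasurable
  have hψGR : StronglyMeasurable[MeasurableSpace.comap (fun ω => (G ω, R ω)) inferInstance] ψ :=
    (hχ.comp (comap_measurable _).snd).stronglyMeasurable
  -- Writing `φZ = (φZ - F) + F`, each of the three resulting terms pairs a function with
  -- vanishing conditional expectation against a bounded function measurable for that σ-algebra.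
  have h₁ : ∫ ω, ψ ω * g ω * (φZ ω - F ω) ∂P = 0 :=
    integral_mul_eq_zero_of_condExp_ae_eq_zero (hG.prodMk (hR.mono hm le_rfl)).comap_le
      (hψGR.mul hg) (hψb.mul_top hgb) ((hφZ.sub hF).integrable le_top)
      (hZG.condExp_comp_sub_condExp_ae_eq_zero hm hZ hG hR hφ hφb)
  have h₂ : ∫ ω, ψ ω * Y ω * (φZ ω - F ω) ∂P = 0 :=
    integral_mul_eq_zero_of_condExp_ae_eq_zero hm (hψ.mul stronglyMeasurable_condExp)
      (hψb.mul_top hY) ((hφZ.sub hF).integrable le_top)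
      (condExp_sub_condExp_ae_eq_zero hm (hφZ.integrable le_top))
  have h₃ : ∫ ω, ψ ω * F ω * (g ω - Y ω) ∂P = 0 :=
    integral_mul_eq_zero_of_condExp_ae_eq_zero hm (hψ.mul stronglyMeasurable_condExp)
      (hψb.mul_top hF) ((hgb.sub hY).integrable le_top)
      (condExp_sub_condExp_ae_eq_zero hm (hgb.integrable le_top))
  have hint₁ : Integrable (fun ω => ψ ω * g ω * (φZ ω - F ω)) P :=
    ((hψb.mul_top hgb).mul_top (hφZ.sub hF)).integrable le_top
  have hint₂ : Integrable (fun ω => ψ ω * Y ω * (φZ ω - F ω)) P :=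
    ((hψb.mul_top hY).mul_top (hφZ.sub hF)).integrable le_top
  have hint₁₂ : Integrable
      (fun ω => ψ ω * g ω * (φZ ω - F ω) - ψ ω * Y ω * (φZ ω - F ω)) P :=
    hint₁.sub hint₂
  have hint₃ : Integrable (fun ω => ψ ω * F ω * (g ω - Y ω)) P :=
    ((hψb.mul_top hF).mul_top (hgb.sub hY)).integrable le_top
  calc ∫ ω, φZ ω * ψ ω * (g ω - Y ω) ∂P
      = ∫ ω, (ψ ω * g ω * (φZ ω - F ω) - ψ ω * Y ω * (φZ ω - F ω))
          + ψ ω * F ω * (g ω - Y ω) ∂P := by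
        congr 1 with ω
        ring
    _ = 0 := by
        rw [integral_add hint₁₂ hint₃, integral_sub hint₁ hint₂, h₁, h₂, h₃]
        simp

lemma condExp_sub_condExp_comap_ae_eq_zero (hZG : CondIndepGiven P m Z G) (hm : m ≤ mΩ)
    (hZ : Measurable Z) (hG : Measurable G) {R : Ω → γ} (hR : Measurable[m] R) {g : Ω → ℝ}
    (hg : StronglyMeasurable[MeasurableSpace.comap (fun ω => (G ω, R ω)) inferInstance] g)
    (hgb : MemLp g ∞ P) :
    P[g - P[g|m]|MeasurableSpace.comap (fun ω => (Z ω, R ω)) inferInstance] =ᵐ[P] 0 :=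
  condExp_comap_prodMk_ae_eq_zero hZ (hR.mono hm le_rfl)
    ((hgb.sub (hgb.condExp le_top)).integrable le_top) fun s₁ s₂ hs₁ hs₂ =>
      hZG.integral_mul_mul_sub_condExp_eq_zero hm hZ hG hR hg hgb
        (measurable_one.indicator hs₁) (measurable_one.indicator hs₂)
        (exists_abs_indicator_one_le s₁) (exists_abs_indicator_one_le s₂)

lemma condExp_ae_eq_zero_of_completeness (hZG : CondIndepGiven P m Z G) (hm : m ≤ mΩ)
    (hZ : Measurable Z) (hG : Measurable G) {R : Ω → γ} (hR : Measurable[m] R) {g : Ω → ℝ}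
    (hg : Measurable[MeasurableSpace.comap (fun ω => (G ω, R ω)) inferInstance] g) {C : ℝ}
    (hgC : ∀ ω, |g ω| ≤ C)
    (hcomplete : ∀ Y : Ω → ℝ, Measurable[m] Y → (∃ C, ∀ ω, |Y ω| ≤ C) →
      P[Y|MeasurableSpace.comap (fun ω => (Z ω, R ω)) inferInstance] =ᵐ[P] 0 → Y =ᵐ[P] 0)
    (hgZR : P[g|MeasurableSpace.comap (fun ω => (Z ω, R ω)) inferInstance] =ᵐ[P] 0) :
    P[g|m] =ᵐ[P] 0 := by
  have hgb : MemLp g ∞ P :=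
    memLp_top_of_bound
      (hg.mono (hG.prodMk (hR.mono hm le_rfl)).comap_le le_rfl).aestronglyMeasurable C
      (ae_of_all _ hgC)
  have hYZR : P[P[g|m]|MeasurableSpace.comap (fun ω => (Z ω, R ω)) inferInstance] =ᵐ[P] 0 := by
    filter_upwards [condExp_sub (hgb.integrable le_top) integrable_condExp _, hgZR,
      hZG.condExp_sub_condExp_comap_ae_eq_zero hm hZ hG hR hg.stronglyMeasurable hgb]
      with ω h₁ h₂ h₃
    simp only [Pi.sub_apply, Pi.zero_apply] at h₁ h₂ h₃ ⊢
    linarith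
  -- completeness is stated for everywhere bounded variables, so `E[g | m]` is truncated first
  obtain ⟨Y, hYm, hYb, hY⟩ := exists_bounded_ae_eq_of_ae_abs_le
    stronglyMeasurable_condExp.measurable
    (ae_bdd_abs_condExp_of_ae_bdd_abs (m := m) (ae_of_all P hgC))
  exact hY.symm.trans (hcomplete Y hYm hYb ((condExp_congr_ae hY).trans hYZR))

end CondIndepGiven

theorem outcome_bridge_transfer_general
    {Ω 𝓤 𝓧 𝓩 𝓦 : Type*} [MeasurableSpace Ω]
    [MeasurableSpace 𝓤] [MeasurableSpace 𝓧]
    [MeasurableSpace 𝓩] [MeasurableSpace 𝓦]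
    (P : Measure Ω) [IsProbabilityMeasure P]
    -- the random variables
    (A : Ω → ℝ) (T : Ω → ℝ) (U : Ω → 𝓤) (X : Ω → 𝓧) (Z : Ω → 𝓩) (W : Ω → 𝓦)
    (hA : Measurable A) (hT : Measurable T) (hU : Measurable U) (hX : Measurable X)
    (hZ : Measurable Z) (hW : Measurable W)
    -- `h t` is, for each `t`, a bounded measurable function of `(W, A, X)`
    (h : ℝ → 𝓦 × ℝ × 𝓧 → ℝ) (hh : ∀ t, Measurable (h t))
    (hhbdd : ∀ t, ∃ C, ∀ x, |h t x| ≤ C)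
    -- observed-level outcome bridge equation
    (hbridge : ∀ t : ℝ,
      (P[(fun ω => h t (W ω, A ω, X ω))|
          MeasurableSpace.comap (fun ω => (A ω, Z ω, X ω)) inferInstance])
        =ᵐ[P]
      (P[(fun ω => if t < T ω then (1 : ℝ) else 0)|
          MeasurableSpace.comap (fun ω => (A ω, Z ω, X ω)) inferInstance]))
    -- outcome completeness
    (hcomplete : ∀ Y : Ω → ℝ,
      Measurable[MeasurableSpace.comap (fun ω => (U ω, A ω, X ω)) inferInstance] Y →
      (∃ C, ∀ ω, |Y ω| ≤ C) →
      (P[Y|MeasurableSpace.comap (fun ω => (Z ω, A ω, X ω)) inferInstance]) =ᵐ[P] 0 →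
      Y =ᵐ[P] 0)
    -- `Z` is conditionally independent of `(W, T)` given `σ(A, U, X)`
    (hproxy : CondIndepGiven P
      (MeasurableSpace.comap (fun ω => (A ω, U ω, X ω)) inferInstance)
      Z (fun ω => (W ω, T ω))) :
    ∀ t : ℝ,
      (P[(fun ω => h t (W ω, A ω, X ω))|
          MeasurableSpace.comap (fun ω => (A ω, U ω, X ω)) inferInstance])
        =ᵐ[P]
      (P[(fun ω => if t < T ω then (1 : ℝ) else 0)|
          MeasurableSpace.comap (fun ω => (A ω, U ω, X ω)) inferInstance]) := by
  intro t
  obtain ⟨C, hC⟩ := hhbdd t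
  set H := fun ω => h t (W ω, A ω, X ω)
  set S := fun ω => if t < T ω then (1 : ℝ) else 0
  have hS_le : ∀ τ : ℝ, |(if t < τ then (1 : ℝ) else 0)| ≤ 1 := fun τ => by
    split_ifs <;> simp
  have hS_meas : Measurable fun τ : ℝ => if t < τ then (1 : ℝ) else 0 :=
    Measurable.ite measurableSet_Ioi measurable_const measurable_const
  have hH : Integrable H P := (memLp_top_comp (hh t) ⟨C, hC⟩ (by fun_prop)).integrable le_top
  have hS : Integrable S P := (memLp_top_comp hS_meas ⟨1, hS_le⟩ hT).integrable le_top
  have hHS_meas : Measurable[MeasurableSpace.comap (fun ω => ((W ω, T ω), (A ω, X ω)))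
      inferInstance] (H - S) :=
    (((hh t).comp (by fun_prop)).sub (hS_meas.comp (by fun_prop)) :
      Measurable fun p : (𝓦 × ℝ) × (ℝ × 𝓧) =>
        h t (p.1.1, p.2.1, p.2.2) - if t < p.1.2 then (1 : ℝ) else 0).comp (comap_measurable _)
  have hobs : P[H - S|MeasurableSpace.comap (fun ω => (Z ω, A ω, X ω)) inferInstance]
      =ᵐ[P] 0 := by
    rw [comap_prodMk_left_comm Z A X]
    filter_upwards [condExp_sub hH hS _, hbridge t] with ω h₁ h₂
    rw [h₁, Pi.sub_apply, h₂, sub_self, Pi.zero_apply]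
  rw [comap_prodMk_left_comm U A X] at hcomplete
  have hlat := hproxy.condExp_ae_eq_zero_of_completeness (hA.prodMk (hU.prodMk hX)).comap_le hZ
    (hW.prodMk hT) ((comap_measurable _).fst.prodMk (comap_measurable _).snd.snd) hHS_meas
    (fun ω => (abs_sub _ _).trans (add_le_add (hC _) (hS_le _))) hcomplete hobs
  filter_upwards [condExp_sub hH hS _, hlat] with ω h₁ h₂
  exact sub_eq_zero.1 (h₁.symm.trans h₂)

/-- **Key transfer step in the proof of Proposition 1, part 2.** If `h` solves the
observed-level outcome bridge equation (for every `t`,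
`E[h(t,W,A,X) | σ(A,Z,X)] = E[1{T > t} | σ(A,Z,X)]` a.s.), the outcome completeness
condition holds, and `Z` is conditionally independent of `(W, T)` given `σ(A,U,X)`, then `h`
also solves the latent-level outcome bridge equation: for every `t`,
`E[h(t,W,A,X) | σ(A,U,X)] = E[1{T > t} | σ(A,U,X)]` a.s. -/
theorem outcome_bridge_transfer
    {Ω 𝓤 𝓧 𝓩 𝓦 : Type*} [MeasurableSpace Ω]
    [MeasurableSpace 𝓤] [StandardBorelSpace 𝓤] [MeasurableSpace 𝓧] [StandardBorelSpace 𝓧]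
    [MeasurableSpace 𝓩] [StandardBorelSpace 𝓩] [MeasurableSpace 𝓦] [StandardBorelSpace 𝓦]
    (P : Measure Ω) [IsProbabilityMeasure P]
    -- the random variables
    (A : Ω → ℝ) (T : Ω → ℝ) (U : Ω → 𝓤) (X : Ω → 𝓧) (Z : Ω → 𝓩) (W : Ω → 𝓦)
    (hA : Measurable A) (hT : Measurable T) (hU : Measurable U) (hX : Measurable X)
    (hZ : Measurable Z) (hW : Measurable W)
    (hA01 : ∀ ω, A ω = 0 ∨ A ω = 1)
    -- `h t` is, for each `t`, a bounded measurable function of `(W, A, X)`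
    (h : ℝ → 𝓦 × ℝ × 𝓧 → ℝ) (hh : ∀ t, Measurable (h t))
    (hhbdd : ∀ t, ∃ C, ∀ x, |h t x| ≤ C)
    -- observed-level outcome bridge equation
    (hbridge : ∀ t : ℝ,
      (P[(fun ω => h t (W ω, A ω, X ω))|
          MeasurableSpace.comap (fun ω => (A ω, Z ω, X ω)) inferInstance])
        =ᵐ[P]
      (P[(fun ω => if t < T ω then (1 : ℝ) else 0)|
          MeasurableSpace.comap (fun ω => (A ω, Z ω, X ω)) inferInstance]))
    -- outcome completeness
    (hcomplete : ∀ Y : Ω → ℝ,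
      Measurable[MeasurableSpace.comap (fun ω => (U ω, A ω, X ω)) inferInstance] Y →
      (∃ C, ∀ ω, |Y ω| ≤ C) →
      (P[Y|MeasurableSpace.comap (fun ω => (Z ω, A ω, X ω)) inferInstance]) =ᵐ[P] 0 →
      Y =ᵐ[P] 0)
    -- `Z` is conditionally independent of `(W, T)` given `σ(A, U, X)`
    (hproxy : CondIndepGiven P
      (MeasurableSpace.comap (fun ω => (A ω, U ω, X ω)) inferInstance)
      Z (fun ω => (W ω, T ω))) :
    ∀ t : ℝ,
      (P[(fun ω => h t (W ω, A ω, X ω))|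
          MeasurableSpace.comap (fun ω => (A ω, U ω, X ω)) inferInstance])
        =ᵐ[P]
      (P[(fun ω => if t < T ω then (1 : ℝ) else 0)|
          MeasurableSpace.comap (fun ω => (A ω, U ω, X ω)) inferInstance]) :=
  outcome_bridge_transfer_general P A T U X Z W hA hT hU hX hZ hW h hh hhbdd hbridge hcomplete
    hproxy
end

section
/- Suppose h satisfies the latent-level outcome bridge equation (for every t ∈ ℝ, E[h(t,W,A,X) | σ(A,U,X)] = E[1{T>t} | σ(A,U,X)] a.s.) and proxy independence holds. Then for every a ∈ {0,1} and every t ∈ ℝ, P(T(a) > t) = E[ h(t,W,a,X) ]. (Proximal outcome-regression identification.) -/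
/-!
Fix `a`, write `ι = 1{A = a}` and `ρ = E[ι | U, X]`, which is positive a.s. by the positivity
assumption. Multiplying the bridge equation by the `σ(A, U, X)`-measurable `ι` and projecting
onto `σ(U, X)` gives `E[ι h(t,W,a,X) | U,X] = E[ι 1{T(a) > t} | U,X]`, because on `{A = a}` the
treatment argument equals `a` and `T = T(a)`. Proxy independence factorises the right side as
`ρ E[1{T(a) > t} | U,X]`, and the left side as `ρ E[h(t,W,a,X) | U,X]` once the independence of
`A` and `W` given `(U, X)` is extended to `A` and `(W, U, X)`. Cancelling `ρ` and taking
expectations gives `P(T(a) > t) = E[h(t,W,a,X)]`.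
-/

open MeasureTheory ProbabilityTheory

section WithDensity

variable {Ω β : Type*} {mΩ : MeasurableSpace Ω} [MeasurableSpace β] {P : Measure Ω}
  {Y : Ω → β} {d : Ω → ℝ}

lemma map_withDensity_ofReal_apply_s5 (hY : Measurable Y) (hd : Integrable d P) (hd0 : 0 ≤ᵐ[P] d)
    {S : Set β} (hS : MeasurableSet S) :
    (P.withDensity fun ω => ENNReal.ofReal (d ω)).map Y S
      = ENNReal.ofReal (∫ ω in Y ⁻¹' S, d ω ∂P) := by
  rw [Measure.map_apply hY hS, withDensity_apply _ (hY hS),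
    ofReal_integral_eq_lintegral_ofReal hd.integrableOn (ae_restrict_of_ae hd0)]

lemma integral_map_withDensity_ofReal_s5 (hY : Measurable Y) (hd : Integrable d P)
    (hd0 : 0 ≤ᵐ[P] d) {φ : β → ℝ} (hφ : Measurable φ) :
    ∫ y, φ y ∂(P.withDensity fun ω => ENNReal.ofReal (d ω)).map Y
      = ∫ ω, d ω * φ (Y ω) ∂P := by
  rw [integral_map hY.aemeasurable hφ.aestronglyMeasurable,
    integral_withDensity_eq_integral_toReal_smul₀ hd.aemeasurable.ennreal_ofReal
      (ae_of_all _ fun _ => ENNReal.ofReal_lt_top)]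
  refine integral_congr_ae ?_
  filter_upwards [hd0] with ω hω
  simp [ENNReal.toReal_ofReal hω]

lemma integral_mul_comp_eq_of_setIntegral_preimage_prod_eq {𝓦 𝓥 : Type*} [MeasurableSpace 𝓦]
    [MeasurableSpace 𝓥] {W : Ω → 𝓦} {V : Ω → 𝓥} (hW : Measurable W) (hV : Measurable V)
    {ι ρ : Ω → ℝ} (hι : Integrable ι P) (hι0 : 0 ≤ᵐ[P] ι) (hρ : Integrable ρ P)
    (hρ0 : 0 ≤ᵐ[P] ρ)
    (hrect : ∀ s v, MeasurableSet s → MeasurableSet v →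
      ∫ ω in W ⁻¹' s ∩ V ⁻¹' v, ι ω ∂P = ∫ ω in W ⁻¹' s ∩ V ⁻¹' v, ρ ω ∂P)
    {φ : 𝓦 × 𝓥 → ℝ} (hφ : Measurable φ) :
    ∫ ω, ι ω * φ (W ω, V ω) ∂P = ∫ ω, ρ ω * φ (W ω, V ω) ∂P := by
  have hY : Measurable fun ω => (W ω, V ω) := hW.prodMk hV
  have : IsFiniteMeasure (P.withDensity fun ω => ENNReal.ofReal (ι ω)) :=
    isFiniteMeasure_withDensity_ofReal hι.hasFiniteIntegral
  have hμ : (P.withDensity fun ω => ENNReal.ofReal (ι ω)).map (fun ω => (W ω, V ω))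
      = (P.withDensity fun ω => ENNReal.ofReal (ρ ω)).map (fun ω => (W ω, V ω)) :=
    Measure.ext_prod fun hs hv => by
      rw [map_withDensity_ofReal_apply_s5 hY hι hι0 (hs.prod hv),
        map_withDensity_ofReal_apply_s5 hY hρ hρ0 (hs.prod hv), Set.mk_preimage_prod,
        hrect _ _ hs hv]
  rw [← integral_map_withDensity_ofReal_s5 hY hι hι0 hφ, hμ,
    integral_map_withDensity_ofReal_s5 hY hρ hρ0 hφ]

end WithDensity

section CondExp

variable {Ω : Type*} {m m₀ : MeasurableSpace Ω} {μ : Measure Ω}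

lemma setIntegral_mul_condExp (hm : m ≤ m₀) [SigmaFinite (μ.trim hm)] {k f : Ω → ℝ}
    (hk : StronglyMeasurable[m] k) (hf : Integrable f μ)
    (hkf : Integrable (fun ω => k ω * f ω) μ) {s : Set Ω} (hs : MeasurableSet[m] s) :
    ∫ ω in s, k ω * μ[f|m] ω ∂μ = ∫ ω in s, k ω * f ω ∂μ := calc
  _ = ∫ ω in s, μ[fun ω => k ω * f ω|m] ω ∂μ :=
    setIntegral_congr_ae (hm s hs)
      ((condExp_mul_of_stronglyMeasurable_left hk hkf hf).mono fun _ h _ => h.symm)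
  _ = ∫ ω in s, k ω * f ω ∂μ := setIntegral_condExp hm hkf hs

lemma condExp_mul_ae_eq_of_condExp_ae_eq {m' : MeasurableSpace Ω} (hmm' : m ≤ m') (hm' : m' ≤ m₀)
    [SigmaFinite (μ.trim hm')] {k f g : Ω → ℝ} (hk : StronglyMeasurable[m'] k)
    (hf : Integrable f μ) (hg : Integrable g μ) (hkf : Integrable (k * f) μ)
    (hkg : Integrable (k * g) μ) (hfg : μ[f|m'] =ᵐ[μ] μ[g|m']) :
    μ[k * f|m] =ᵐ[μ] μ[k * g|m] := calc
  μ[k * f|m] =ᵐ[μ] μ[μ[k * f|m']|m] := (condExp_condExp_of_le hmm' hm').symm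
  _ =ᵐ[μ] μ[k * μ[f|m']|m] :=
    condExp_congr_ae (condExp_mul_of_stronglyMeasurable_left hk hkf hf)
  _ =ᵐ[μ] μ[k * μ[g|m']|m] := condExp_congr_ae hfg.mul_left
  _ =ᵐ[μ] μ[μ[k * g|m']|m] :=
    condExp_congr_ae (condExp_mul_of_stronglyMeasurable_left hk hkg hg).symm
  _ =ᵐ[μ] μ[k * g|m] := condExp_condExp_of_le hmm' hm'

lemma integral_eq_of_mul_condExp_ae_eq (hm : m ≤ m₀) [SigmaFinite (μ.trim hm)] {ρ f g : Ω → ℝ}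
    (hρ : ∀ᵐ ω ∂μ, 0 < ρ ω) (hfg : (fun ω => ρ ω * μ[f|m] ω) =ᵐ[μ] fun ω => ρ ω * μ[g|m] ω) :
    ∫ ω, f ω ∂μ = ∫ ω, g ω ∂μ := by
  rw [← integral_condExp hm, ← integral_condExp hm (f := g)]
  refine integral_congr_ae ?_
  filter_upwards [hρ, hfg] with ω hρω hω
  exact mul_left_cancel₀ hρω.ne' hω

end CondExp

lemma CondIndepGiven.comp {Ω α β α' β' : Type*} {m : MeasurableSpace Ω} [MeasurableSpace Ω]
    [MeasurableSpace α] [MeasurableSpace β] [MeasurableSpace α'] [MeasurableSpace β']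
    {P : Measure Ω} {F : Ω → α} {G : Ω → β} (h : CondIndepGiven P m F G)
    {f : α → α'} {g : β → β'} (hf : Measurable f) (hg : Measurable g) :
    CondIndepGiven P m (fun ω => f (F ω)) (fun ω => g (G ω)) :=
  fun f' g' hf' hg' ⟨C, hC⟩ ⟨D, hD⟩ =>
    h (fun x => f' (f x)) (fun y => g' (g y)) (hf'.comp hf) (hg'.comp hg)
      ⟨C, fun _ => hC _⟩ ⟨D, fun _ => hD _⟩

section CondIndepGiven

variable {Ω α 𝓦 𝓥 : Type*} [MeasurableSpace Ω] [MeasurableSpace α]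
  [MeasurableSpace 𝓦] [mV : MeasurableSpace 𝓥] {P : Measure Ω}

lemma integrable_comp_of_abs_le [IsFiniteMeasure P] {F : Ω → α} (hF : Measurable F)
    {f : α → ℝ} (hf : Measurable f) (hfb : ∃ C, ∀ x, |f x| ≤ C) :
    Integrable (fun ω => f (F ω)) P :=
  let ⟨C, hC⟩ := hfb
  .of_bound (hf.comp hF).aestronglyMeasurable C (ae_of_all _ fun _ => hC _)

lemma CondIndepGiven.setIntegral_preimage_prod_eq [IsFiniteMeasure P] {F : Ω → α}
    {W : Ω → 𝓦} {V : Ω → 𝓥} (hF : Measurable F) (hW : Measurable W) (hV : Measurable V)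
    (h : CondIndepGiven P (mV.comap V) F W) {f : α → ℝ} (hf : Measurable f)
    (hfb : ∃ C, ∀ x, |f x| ≤ C) {s : Set 𝓦} {v : Set 𝓥} (hs : MeasurableSet s)
    (hv : MeasurableSet v) :
    ∫ ω in W ⁻¹' s ∩ V ⁻¹' v, f (F ω) ∂P
      = ∫ ω in W ⁻¹' s ∩ V ⁻¹' v, P[fun ω => f (F ω)|mV.comap V] ω ∂P := by
  have hm : mV.comap V ≤ ‹MeasurableSpace Ω› := hV.comap_le
  have hu : MeasurableSet[mV.comap V] (V ⁻¹' v) := ⟨v, hv, rfl⟩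
  have hind : Measurable (s.indicator (1 : 𝓦 → ℝ)) := measurable_one.indicator hs
  have hind_le : ∀ w, |s.indicator (1 : 𝓦 → ℝ) w| ≤ 1 := fun w => by
    by_cases hw : w ∈ s <;> simp [hw]
  have hind_bdd : ∀ᵐ ω ∂P, ‖s.indicator (1 : 𝓦 → ℝ) (W ω)‖ ≤ 1 := ae_of_all _ fun _ => hind_le _
  have hιI : Integrable (fun ω => f (F ω) * s.indicator 1 (W ω)) P :=
    (integrable_comp_of_abs_le hF hf hfb).mul_bdd (hind.comp hW).aestronglyMeasurable hind_bdd
  have hρI : Integrable (fun ω => P[fun ω => f (F ω)|mV.comap V] ω * s.indicator 1 (W ω)) P :=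
    integrable_condExp.mul_bdd (hind.comp hW).aestronglyMeasurable hind_bdd
  have hrestrict : ∀ d : Ω → ℝ, ∫ ω in W ⁻¹' s ∩ V ⁻¹' v, d ω ∂P
      = ∫ ω in V ⁻¹' v, d ω * s.indicator 1 (W ω) ∂P := fun d => by
    rw [Set.inter_comm, ← setIntegral_indicator (hW hs)]
    congr 1 with ω
    by_cases hω : W ω ∈ s <;> simp [hω]
  calc ∫ ω in W ⁻¹' s ∩ V ⁻¹' v, f (F ω) ∂P
      = ∫ ω in V ⁻¹' v, P[fun ω => f (F ω) * s.indicator 1 (W ω)|mV.comap V] ω ∂P := by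
        rw [hrestrict, setIntegral_condExp hm hιI hu]
    _ = ∫ ω in V ⁻¹' v, P[fun ω => f (F ω)|mV.comap V] ω
          * P[fun ω => s.indicator 1 (W ω)|mV.comap V] ω ∂P :=
        setIntegral_congr_ae (hm _ hu) ((h f _ hf hind hfb ⟨1, hind_le⟩).mono fun _ h _ => h)
    _ = ∫ ω in W ⁻¹' s ∩ V ⁻¹' v, P[fun ω => f (F ω)|mV.comap V] ω ∂P := by
        rw [setIntegral_mul_condExp hm stronglyMeasurable_condExp
          (integrable_comp_of_abs_le hW hind ⟨1, hind_le⟩) hρI hu, hrestrict]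

/-- As `f ≥ 0`, the functions `f ∘ F` and `P[f ∘ F | V]` are densities of finite measures; pushed
forward by `(W, V)` they agree on rectangles, hence everywhere. -/
lemma CondIndepGiven.condExp_mul_comp_prod [IsFiniteMeasure P] {F : Ω → α}
    {W : Ω → 𝓦} {V : Ω → 𝓥} (hF : Measurable F) (hW : Measurable W) (hV : Measurable V)
    (h : CondIndepGiven P (mV.comap V) F W) {f : α → ℝ} (hf : Measurable f) (hf0 : 0 ≤ f)
    (hfb : ∃ C, ∀ x, |f x| ≤ C) {φ : 𝓦 × 𝓥 → ℝ} (hφ : Measurable φ)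
    (hφb : ∃ C, ∀ x, |φ x| ≤ C) :
    P[fun ω => f (F ω) * φ (W ω, V ω)|mV.comap V] =ᵐ[P]
      fun ω => P[fun ω => f (F ω)|mV.comap V] ω * P[fun ω => φ (W ω, V ω)|mV.comap V] ω := by
  obtain ⟨C, hC⟩ := hφb
  have hm : mV.comap V ≤ ‹MeasurableSpace Ω› := hV.comap_le
  have hι : Integrable (fun ω => f (F ω)) P := integrable_comp_of_abs_le hF hf hfb
  have hρ : Integrable (P[fun ω => f (F ω)|mV.comap V]) P := integrable_condExp
  have hΦ : Integrable (fun ω => φ (W ω, V ω)) P :=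
    integrable_comp_of_abs_le (hW.prodMk hV) hφ ⟨C, hC⟩
  have hΦ_le : ∀ᵐ ω ∂P, ‖φ (W ω, V ω)‖ ≤ C := ae_of_all _ fun _ => hC _
  have hEΦ_le : ∀ᵐ ω ∂P, ‖P[fun ω => φ (W ω, V ω)|mV.comap V] ω‖ ≤ C :=
    ae_bdd_abs_condExp_of_ae_bdd_abs hΦ_le
  have hrestrict : ∀ (v : Set 𝓥) (d : Ω → ℝ), MeasurableSet v →
      ∫ ω in V ⁻¹' v, d ω * φ (W ω, V ω) ∂P
        = ∫ ω, d ω * (Set.univ ×ˢ v).indicator φ (W ω, V ω) ∂P := fun v d hv => by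
    rw [← integral_indicator (hV hv)]
    congr 1 with ω
    by_cases hω : V ω ∈ v <;> simp [hω]
  have hιΦ : Integrable (fun ω => f (F ω) * φ (W ω, V ω)) P :=
    hι.mul_bdd (hφ.comp (hW.prodMk hV)).aestronglyMeasurable hΦ_le
  refine (ae_eq_condExp_of_forall_setIntegral_eq hm hιΦ
    (fun _ _ _ => (hρ.mul_bdd integrable_condExp.aestronglyMeasurable hEΦ_le).integrableOn) ?_
    (stronglyMeasurable_condExp.mul stronglyMeasurable_condExp).aestronglyMeasurable).symm
  rintro _ ⟨v, hv, rfl⟩ -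
  rw [setIntegral_mul_condExp hm stronglyMeasurable_condExp hΦ
      (hρ.mul_bdd (hφ.comp (hW.prodMk hV)).aestronglyMeasurable hΦ_le) ⟨v, hv, rfl⟩,
    hrestrict v _ hv, hrestrict v _ hv]
  exact (integral_mul_comp_eq_of_setIntegral_preimage_prod_eq hW hV hι
    (ae_of_all _ fun _ => hf0 _) hρ (condExp_nonneg (ae_of_all _ fun _ => hf0 _))
    (fun _ _ hs hv => h.setIntegral_preimage_prod_eq hF hW hV hf hfb hs hv)
    (hφ.indicator (MeasurableSet.univ.prod hv))).symm

end CondIndepGiven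

lemma condExp_indicator_singleton_pos_of_binary {Ω : Type*} {m : MeasurableSpace Ω}
    [MeasurableSpace Ω] (hm : m ≤ ‹MeasurableSpace Ω›) {P : Measure Ω} [IsFiniteMeasure P]
    {A : Ω → ℝ} (hA : Measurable A) (hA01 : ∀ ω, A ω = 0 ∨ A ω = 1) {π : Ω → ℝ}
    (hπ : π =ᵐ[P] P[A|m]) (hπpos : ∀ᵐ ω ∂P, 0 < π ω ∧ π ω < 1) {a : ℝ} (ha : a = 0 ∨ a = 1) :
    ∀ᵐ ω ∂P, 0 < P[fun ω => ({a} : Set ℝ).indicator (1 : ℝ → ℝ) (A ω)|m] ω := by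
  have hAint : Integrable A P :=
    .of_bound hA.aestronglyMeasurable 1
      (ae_of_all _ fun ω => by rcases hA01 ω with h | h <;> simp [h])
  rcases ha with rfl | rfl
  · have hι : (fun ω => ({0} : Set ℝ).indicator (1 : ℝ → ℝ) (A ω)) = (fun _ => (1 : ℝ)) - A :=
      funext fun ω => by rcases hA01 ω with h | h <;> simp [h]
    filter_upwards [condExp_sub (m := m) (integrable_const (1 : ℝ)) hAint, hπ, hπpos]
      with ω hsub hω hωpos
    rw [hι, hsub, Pi.sub_apply, condExp_const hm, ← hω]
    linarith [hωpos.2]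
  · have hι : (fun ω => ({1} : Set ℝ).indicator (1 : ℝ → ℝ) (A ω)) = A :=
      funext fun ω => by rcases hA01 ω with h | h <;> simp [h]
    filter_upwards [hπ, hπpos] with ω hω hωpos
    rw [hι, ← hω]
    exact hωpos.1

theorem integral_comp_potentialOutcome_eq_integral_bridge {Ω 𝓥 𝓦 : Type*} [MeasurableSpace Ω]
    [mV : MeasurableSpace 𝓥] [MeasurableSpace 𝓦] {P : Measure Ω} [IsFiniteMeasure P]
    {A T Ta : Ω → ℝ} {V : Ω → 𝓥} {W : Ω → 𝓦} (hA : Measurable A) (hT : Measurable T)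
    (hV : Measurable V) (hW : Measurable W) {a : ℝ}
    (hcons : ∀ ω, A ω = a → T ω = Ta ω) {g : ℝ → ℝ} (hg : Measurable g)
    (hgb : ∃ C, ∀ x, |g x| ≤ C) {q : 𝓦 × ℝ × 𝓥 → ℝ} (hq : Measurable q)
    (hqb : ∃ C, ∀ x, |q x| ≤ C)
    (hbridge :
      P[fun ω => q (W ω, A ω, V ω)|MeasurableSpace.comap (fun ω => (A ω, V ω)) inferInstance]
        =ᵐ[P] P[fun ω => g (T ω)|MeasurableSpace.comap (fun ω => (A ω, V ω)) inferInstance])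
    (hindW : CondIndepGiven P (mV.comap V) A W) (hindTa : CondIndepGiven P (mV.comap V) A Ta)
    (hpos : ∀ᵐ ω ∂P, 0 < P[fun ω => ({a} : Set ℝ).indicator (1 : ℝ → ℝ) (A ω)|mV.comap V] ω) :
    ∫ ω, g (Ta ω) ∂P = ∫ ω, q (W ω, a, V ω) ∂P := by
  have hm : mV.comap V ≤ ‹MeasurableSpace Ω› := hV.comap_le
  have hVAV : Measurable[MeasurableSpace.comap (fun ω => (A ω, V ω)) inferInstance] V :=
    measurable_snd.comp (comap_measurable (fun ω => (A ω, V ω)))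
  set ι : Ω → ℝ := fun ω => ({a} : Set ℝ).indicator (1 : ℝ → ℝ) (A ω)
  have hind : Measurable (({a} : Set ℝ).indicator (1 : ℝ → ℝ)) :=
    measurable_one.indicator (measurableSet_singleton a)
  have hind_le : ∀ x, |({a} : Set ℝ).indicator (1 : ℝ → ℝ) x| ≤ 1 := fun x => by
    by_cases hx : x = a <;> simp [hx]
  have hιmAV : StronglyMeasurable[MeasurableSpace.comap (fun ω => (A ω, V ω)) inferInstance] ι :=
    (hind.comp (measurable_fst.comp (comap_measurable _))).stronglyMeasurable
  have hι_le : ∀ᵐ ω ∂P, ‖ι ω‖ ≤ 1 := ae_of_all _ fun _ => hind_le _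
  have hq_int := integrable_comp_of_abs_le (P := P) (hW.prodMk (hA.prodMk hV)) hq hqb
  have hg_int := integrable_comp_of_abs_le (P := P) hT hg hgb
  have hιq_eq : ι * (fun ω => q (W ω, A ω, V ω)) = fun ω => ι ω * q (W ω, a, V ω) :=
    funext fun ω => by by_cases hω : A ω = a <;> simp [ι, hω]
  have hιg_eq : ι * (fun ω => g (T ω)) = fun ω => ι ω * g (Ta ω) :=
    funext fun ω => by by_cases hω : A ω = a <;> simp [ι, hω, hcons ω]
  have hbridge_ι : P[fun ω => ι ω * q (W ω, a, V ω)|mV.comap V]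
      =ᵐ[P] P[fun ω => ι ω * g (Ta ω)|mV.comap V] := by
    rw [← hιq_eq, ← hιg_eq]
    exact condExp_mul_ae_eq_of_condExp_ae_eq hVAV.comap_le (hA.prodMk hV).comap_le hιmAV
      hq_int hg_int (hq_int.bdd_mul (hind.comp hA).aestronglyMeasurable hι_le)
      (hg_int.bdd_mul (hind.comp hA).aestronglyMeasurable hι_le) hbridge
  have hfactor_q := hindW.condExp_mul_comp_prod hA hW hV hind
    (Set.indicator_nonneg fun _ _ => zero_le_one) ⟨1, hind_le⟩
    (φ := fun p => q (p.1, a, p.2))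
    (hq.comp (measurable_fst.prodMk (measurable_const.prodMk measurable_snd)))
    (let ⟨C, hC⟩ := hqb; ⟨C, fun _ => hC _⟩)
  have hfactor_g := hindTa (({a} : Set ℝ).indicator 1) g hind hg ⟨1, hind_le⟩ hgb
  refine (integral_eq_of_mul_condExp_ae_eq hm hpos ?_).symm
  filter_upwards [hfactor_q, hbridge_ι, hfactor_g] with ω hq' hb hg'
  exact hq'.symm.trans (hb.trans hg')

theorem proximal_outcome_regression_identification_general
    {Ω 𝓤 𝓧 𝓩 𝓦 : Type*} [MeasurableSpace Ω]
    [MeasurableSpace 𝓤] [MeasurableSpace 𝓧]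
    [MeasurableSpace 𝓩] [MeasurableSpace 𝓦]
    (P : Measure Ω) [IsProbabilityMeasure P]
    -- the random variables
    (A : Ω → ℝ) (T1 T0 : Ω → ℝ) (U : Ω → 𝓤) (X : Ω → 𝓧) (Z : Ω → 𝓩) (W : Ω → 𝓦)
    (hA : Measurable A) (hT1 : Measurable T1) (hT0 : Measurable T0)
    (hU : Measurable U) (hX : Measurable X) (hW : Measurable W)
    (hA01 : ∀ ω, A ω = 0 ∨ A ω = 1)
    -- observed outcome (consistency)
    (T : Ω → ℝ) (hT : ∀ ω, T ω = A ω * T1 ω + (1 - A ω) * T0 ω)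
    -- positivity for a version `π` of `P(A = 1 | σ(U, X))`
    (π : Ω → ℝ)
    (hπver : π =ᵐ[P] P[A|MeasurableSpace.comap (fun ω => (U ω, X ω)) inferInstance])
    (hπpos : ∀ᵐ ω ∂P, 0 < π ω ∧ π ω < 1)
    -- `h t` is, for each `t`, a bounded measurable function of `(W, A, X)`
    (h : ℝ → 𝓦 × ℝ × 𝓧 → ℝ) (hh : ∀ t, Measurable (h t))
    (hhbdd : ∀ t, ∃ C, ∀ x, |h t x| ≤ C)
    -- latent-level outcome bridge equation
    (hbridge : ∀ t : ℝ,
      (P[(fun ω => h t (W ω, A ω, X ω))|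
          MeasurableSpace.comap (fun ω => (A ω, U ω, X ω)) inferInstance])
        =ᵐ[P]
      (P[(fun ω => if t < T ω then (1 : ℝ) else 0)|
          MeasurableSpace.comap (fun ω => (A ω, U ω, X ω)) inferInstance]))
    -- proxy independence: `(Z, A) ⟂ (W, T(a)) | σ(U, X)` for `a = 1, 0`
    (hproxy1 : CondIndepGiven P (MeasurableSpace.comap (fun ω => (U ω, X ω)) inferInstance)
      (fun ω => (Z ω, A ω)) (fun ω => (W ω, T1 ω)))
    (hproxy0 : CondIndepGiven P (MeasurableSpace.comap (fun ω => (U ω, X ω)) inferInstance)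
      (fun ω => (Z ω, A ω)) (fun ω => (W ω, T0 ω))) :
    ∀ a : ℝ, (a = 0 ∨ a = 1) → ∀ t : ℝ,
      (P {ω | t < (if a = 1 then T1 ω else T0 ω)}).toReal
        = ∫ ω, h t (W ω, a, X ω) ∂P := by
  intro a ha t
  set Ta : Ω → ℝ := fun ω => if a = 1 then T1 ω else T0 ω
  have hTa : Measurable Ta := by by_cases ha1 : a = 1 <;> simpa [Ta, ha1]
  have hproxy : CondIndepGiven P (MeasurableSpace.comap (fun ω => (U ω, X ω)) inferInstance)
      (fun ω => (Z ω, A ω)) (fun ω => (W ω, Ta ω)) := by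
    by_cases ha1 : a = 1 <;> simpa [Ta, ha1]
  have hcons : ∀ ω, A ω = a → T ω = Ta ω := by
    rintro ω rfl
    rcases hA01 ω with h0 | h1 <;> simp [Ta, hT ω, *]
  have hTmeas : Measurable T := by
    rw [funext hT]
    fun_prop
  obtain ⟨C, hC⟩ := hhbdd t
  rw [← measureReal_def, ← integral_indicator_one (measurableSet_lt measurable_const hTa)]
  -- the indicator of `{t < Ta}` is definitionally `fun ω => if t < Ta ω then 1 else 0`
  exact integral_comp_potentialOutcome_eq_integral_bridge hA hTmeas (hU.prodMk hX) hW hcons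
    (g := fun x => if t < x then 1 else 0) (Measurable.ite measurableSet_Ioi measurable_const
      measurable_const) ⟨1, fun x => by split_ifs <;> simp⟩
    (q := fun p => h t (p.1, p.2.1, p.2.2.2)) (by fun_prop) ⟨C, fun _ => hC _⟩
    (hbridge t) (hproxy.comp measurable_snd measurable_fst)
    (hproxy.comp measurable_snd measurable_snd)
    (condExp_indicator_singleton_pos_of_binary (hU.prodMk hX).comap_le hA hA01 hπver hπpos ha)

/-- **Proximal outcome-regression identification.** If `h` solves the latent-level outcome
bridge equation (for every `t`, `E[h(t,W,A,X) | σ(A,U,X)] = E[1{T > t} | σ(A,U,X)]` a.s.)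
and proxy independence holds, then for every `a ∈ {0,1}` and `t ∈ ℝ`,
`P(T(a) > t) = E[ h(t, W, a, X) ]`. -/
theorem proximal_outcome_regression_identification
    {Ω 𝓤 𝓧 𝓩 𝓦 : Type*} [MeasurableSpace Ω]
    [MeasurableSpace 𝓤] [StandardBorelSpace 𝓤] [MeasurableSpace 𝓧] [StandardBorelSpace 𝓧]
    [MeasurableSpace 𝓩] [StandardBorelSpace 𝓩] [MeasurableSpace 𝓦] [StandardBorelSpace 𝓦]
    (P : Measure Ω) [IsProbabilityMeasure P]
    -- the random variables
    (A : Ω → ℝ) (T1 T0 : Ω → ℝ) (U : Ω → 𝓤) (X : Ω → 𝓧) (Z : Ω → 𝓩) (W : Ω → 𝓦)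
    (hA : Measurable A) (hT1 : Measurable T1) (hT0 : Measurable T0)
    (hU : Measurable U) (hX : Measurable X) (hZ : Measurable Z) (hW : Measurable W)
    (hA01 : ∀ ω, A ω = 0 ∨ A ω = 1)
    -- observed outcome (consistency)
    (T : Ω → ℝ) (hT : ∀ ω, T ω = A ω * T1 ω + (1 - A ω) * T0 ω)
    -- positivity for a version `π` of `P(A = 1 | σ(U, X))`
    (π : Ω → ℝ)
    (hπver : π =ᵐ[P] P[A|MeasurableSpace.comap (fun ω => (U ω, X ω)) inferInstance])
    (hπpos : ∀ᵐ ω ∂P, 0 < π ω ∧ π ω < 1)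
    -- `h t` is, for each `t`, a bounded measurable function of `(W, A, X)`
    (h : ℝ → 𝓦 × ℝ × 𝓧 → ℝ) (hh : ∀ t, Measurable (h t))
    (hhbdd : ∀ t, ∃ C, ∀ x, |h t x| ≤ C)
    -- latent-level outcome bridge equation
    (hbridge : ∀ t : ℝ,
      (P[(fun ω => h t (W ω, A ω, X ω))|
          MeasurableSpace.comap (fun ω => (A ω, U ω, X ω)) inferInstance])
        =ᵐ[P]
      (P[(fun ω => if t < T ω then (1 : ℝ) else 0)|
          MeasurableSpace.comap (fun ω => (A ω, U ω, X ω)) inferInstance]))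
    -- proxy independence: `(Z, A) ⟂ (W, T(a)) | σ(U, X)` for `a = 1, 0`
    (hproxy1 : CondIndepGiven P (MeasurableSpace.comap (fun ω => (U ω, X ω)) inferInstance)
      (fun ω => (Z ω, A ω)) (fun ω => (W ω, T1 ω)))
    (hproxy0 : CondIndepGiven P (MeasurableSpace.comap (fun ω => (U ω, X ω)) inferInstance)
      (fun ω => (Z ω, A ω)) (fun ω => (W ω, T0 ω))) :
    ∀ a : ℝ, (a = 0 ∨ a = 1) → ∀ t : ℝ,
      (P {ω | t < (if a = 1 then T1 ω else T0 ω)}).toReal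
        = ∫ ω, h t (W ω, a, X ω) ∂P :=
  proximal_outcome_regression_identification_general P A T1 T0 U X Z W hA hT1 hT0 hU hX hW hA01 T hT
    π hπver hπpos h hh hhbdd hbridge hproxy1 hproxy0
end

section
/- Suppose q satisfies the observed-level treatment bridge equation E[q(Z,A,X) | σ(A,W,X)] = 1/P(A|σ(W,X)) a.s. Then for every bounded measurable function n of (W,A,X), E[ q(Z,A,X)·n(W,A,X) ] = E[ n(W,1,X) + n(W,0,X) ]. (Population moment restriction underlying the estimating equation for the treatment confounding bridge function.) -/
/-!
Conditioning on `σ(A, W, X)` replaces `q` by the inverse propensity weight, so with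
`π = P(A = 1 | W, X)` we get `E[q n] = E[A n(W,1,X) / π + (1 - A) n(W,0,X) / (1 - π)]`.
Conditioning each summand on `σ(W, X)` turns `A` into `π` and `1 - A` into `1 - π`,
which cancel the weights.
-/

open MeasureTheory ProbabilityTheory

namespace TreatmentBridge

variable {Ω : Type*} {m m₀ : MeasurableSpace Ω} {μ : Measure Ω} [IsFiniteMeasure μ]

theorem integral_mul_condExp (hm : m ≤ m₀) {f g : Ω → ℝ} (hg : StronglyMeasurable[m] g)
    (hgf : Integrable (g * f) μ) (hf : Integrable f μ) :
    ∫ ω, g ω * μ[f|m] ω ∂μ = ∫ ω, g ω * f ω ∂μ :=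
  calc ∫ ω, g ω * μ[f|m] ω ∂μ = ∫ ω, μ[g * f|m] ω ∂μ :=
        integral_congr_ae (condExp_mul_of_stronglyMeasurable_left hg hgf hf).symm
    _ = ∫ ω, g ω * f ω ∂μ := integral_condExp hm

theorem integral_div_condExp_mul (hm : m ≤ m₀) {a f : Ω → ℝ} (ha : Integrable a μ)
    (hf : StronglyMeasurable[m] f) (hpos : ∀ᵐ ω ∂μ, μ[a|m] ω ≠ 0)
    (hint : Integrable (fun ω => f ω / μ[a|m] ω * a ω) μ) :
    ∫ ω, f ω / μ[a|m] ω * a ω ∂μ = ∫ ω, f ω ∂μ := by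
  have hg : StronglyMeasurable[m] (fun ω => f ω / μ[a|m] ω) :=
    hf.div stronglyMeasurable_condExp
  rw [← integral_mul_condExp hm hg hint ha]
  refine integral_congr_ae ?_
  filter_upwards [hpos] with ω hω
  exact div_mul_cancel₀ _ hω

theorem condExp_one_sub (hm : m ≤ m₀) {a : Ω → ℝ} (ha : Integrable a μ) :
    μ[fun ω => 1 - a ω|m] =ᵐ[μ] fun ω => 1 - μ[a|m] ω := by
  have h := condExp_sub (integrable_const (1 : ℝ)) ha m
  rw [condExp_const hm] at h
  exact h

theorem integral_mul_eq_of_condExp_eq_inv_propensity {𝒢 : MeasurableSpace Ω} (hm : m ≤ m₀)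
    (h𝒢 : 𝒢 ≤ m₀) {a q n n₁ n₀ : Ω → ℝ} {C : ℝ} (ha01 : ∀ ω, a ω = 0 ∨ a ω = 1)
    (ha : Integrable a μ) (hq : Integrable q μ) (hn : StronglyMeasurable[𝒢] n)
    (hnC : ∀ᵐ ω ∂μ, ‖n ω‖ ≤ C) (hn₁ : StronglyMeasurable[m] n₁) (hn₀ : StronglyMeasurable[m] n₀)
    (hn₁i : Integrable n₁ μ) (hn₀i : Integrable n₀ μ)
    (hsplit : ∀ ω, n ω = a ω * n₁ ω + (1 - a ω) * n₀ ω)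
    (hpos : ∀ᵐ ω ∂μ, 0 < μ[a|m] ω ∧ μ[a|m] ω < 1)
    (hbridge : μ[q|𝒢] =ᵐ[μ] fun ω => (a ω * μ[a|m] ω + (1 - a ω) * (1 - μ[a|m] ω))⁻¹) :
    ∫ ω, q ω * n ω ∂μ = ∫ ω, n₁ ω + n₀ ω ∂μ := by
  set b : Ω → ℝ := fun ω => 1 - a ω
  have hb : Integrable b μ := (integrable_const 1).sub ha
  set S : Ω → ℝ := fun ω => n₁ ω / μ[a|m] ω * a ω + n₀ ω / μ[b|m] ω * b ω
  have hweight : (fun ω => n ω * μ[q|𝒢] ω) =ᵐ[μ] S := by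
    filter_upwards [hbridge, condExp_one_sub hm ha] with ω hqω hbω
    simp only [S, b, hsplit, hqω, hbω]
    rcases ha01 ω with h | h <;> simp [h, div_eq_mul_inv]
  have hnq : Integrable (n * q) μ := hq.bdd_mul (hn.mono h𝒢).aestronglyMeasurable hnC
  have hS : Integrable S μ :=
    (integrable_condExp.bdd_mul (hn.mono h𝒢).aestronglyMeasurable hnC).congr hweight
  have habound : ∀ ω, ‖a ω‖ ≤ 1 := fun ω => by rcases ha01 ω with h | h <;> simp [h]
  have hbbound : ∀ ω, ‖b ω‖ ≤ 1 := fun ω => by rcases ha01 ω with h | h <;> simp [b, h]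
  -- the summands of `S` are `a * S` and `b * S`, because `a * b = 0` and `a * a = a`
  have hS₁ : Integrable (fun ω => n₁ ω / μ[a|m] ω * a ω) μ := by
    refine (hS.bdd_mul ha.aestronglyMeasurable (ae_of_all _ habound)).congr (ae_of_all _ ?_)
    intro ω
    rcases ha01 ω with h | h <;> simp [S, b, h]
  have hS₀ : Integrable (fun ω => n₀ ω / μ[b|m] ω * b ω) μ := by
    refine (hS.bdd_mul hb.aestronglyMeasurable (ae_of_all _ hbbound)).congr (ae_of_all _ ?_)
    intro ω
    rcases ha01 ω with h | h <;> simp [S, b, h]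
  have hposb : ∀ᵐ ω ∂μ, μ[b|m] ω ≠ 0 := by
    filter_upwards [hpos, condExp_one_sub hm ha] with ω hω hbω
    simp only [b, hbω]; linarith [hω.2]
  calc ∫ ω, q ω * n ω ∂μ = ∫ ω, n ω * μ[q|𝒢] ω ∂μ := by
        rw [integral_mul_condExp h𝒢 hn hnq hq]; simp_rw [mul_comm]
    _ = ∫ ω, S ω ∂μ := integral_congr_ae hweight
    _ = ∫ ω, n₁ ω + n₀ ω ∂μ := by
        rw [integral_add hS₁ hS₀, integral_add hn₁i hn₀i,
          integral_div_condExp_mul hm ha hn₁ (hpos.mono fun ω h => h.1.ne') hS₁,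
          integral_div_condExp_mul hm hb hn₀ hposb hS₀]

end TreatmentBridge

open TreatmentBridge in
theorem treatment_bridge_moment_restriction_general
    {Ω 𝓧 𝓩 𝓦 : Type*} [MeasurableSpace Ω]
    [MeasurableSpace 𝓧]
    [MeasurableSpace 𝓩] [MeasurableSpace 𝓦]
    (P : Measure Ω) [IsProbabilityMeasure P]
    -- the random variables
    (A : Ω → ℝ) (X : Ω → 𝓧) (Z : Ω → 𝓩) (W : Ω → 𝓦)
    (hA : Measurable A) (hX : Measurable X) (hZ : Measurable Z) (hW : Measurable W)
    (hA01 : ∀ ω, A ω = 0 ∨ A ω = 1)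
    -- positivity for a version `πW` of `P(A = 1 | σ(W, X))`
    (πW : Ω → ℝ)
    (hπWver : πW =ᵐ[P] P[A|MeasurableSpace.comap (fun ω => (W ω, X ω)) inferInstance])
    (hπWpos : ∀ᵐ ω ∂P, 0 < πW ω ∧ πW ω < 1)
    -- `q` is a bounded measurable function of `(Z, A, X)`
    (q : 𝓩 × ℝ × 𝓧 → ℝ) (hq : Measurable q) (hqbdd : ∃ C, ∀ x, |q x| ≤ C)
    -- observed-level treatment bridge equation
    (hbridge : (P[(fun ω => q (Z ω, A ω, X ω))|
        MeasurableSpace.comap (fun ω => (A ω, W ω, X ω)) inferInstance])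
      =ᵐ[P] fun ω => (A ω * πW ω + (1 - A ω) * (1 - πW ω))⁻¹) :
    ∀ n : 𝓦 × ℝ × 𝓧 → ℝ, Measurable n → (∃ C, ∀ x, |n x| ≤ C) →
      ∫ ω, q (Z ω, A ω, X ω) * n (W ω, A ω, X ω) ∂P
        = ∫ ω, n (W ω, 1, X ω) + n (W ω, 0, X ω) ∂P := by
  rintro n hn ⟨Cn, hCn⟩
  obtain ⟨Cq, hCq⟩ := hqbdd
  have integrable_of_abs_le {f : Ω → ℝ} (hf : Measurable f) (C : ℝ) (hfC : ∀ ω, |f ω| ≤ C) :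
      Integrable f P :=
    .of_bound hf.aestronglyMeasurable C (ae_of_all _ hfC)
  have hA_int : Integrable A P :=
    integrable_of_abs_le hA 1 fun ω => by rcases hA01 ω with h | h <;> simp [h]
  have hq_int : Integrable (fun ω => q (Z ω, A ω, X ω)) P :=
    integrable_of_abs_le (by fun_prop) Cq fun ω => hCq _
  have hn_at_int (a : ℝ) : Integrable (fun ω => n (W ω, a, X ω)) P :=
    integrable_of_abs_le (by fun_prop) Cn fun ω => hCn _
  have hn_meas : StronglyMeasurable[MeasurableSpace.comap (fun ω => (A ω, W ω, X ω)) inferInstance]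
      (fun ω => n (W ω, A ω, X ω)) :=
    ((show Measurable fun p : ℝ × 𝓦 × 𝓧 => n (p.2.1, p.1, p.2.2) by fun_prop).comp
      (comap_measurable _)).stronglyMeasurable
  have hn_at_meas (a : ℝ) : StronglyMeasurable[MeasurableSpace.comap (fun ω => (W ω, X ω))
      inferInstance] (fun ω => n (W ω, a, X ω)) :=
    ((show Measurable fun p : 𝓦 × 𝓧 => n (p.1, a, p.2) by fun_prop).comp
      (comap_measurable _)).stronglyMeasurable
  have hpos : ∀ᵐ ω ∂P, 0 < P[A|MeasurableSpace.comap (fun ω => (W ω, X ω)) inferInstance] ω ∧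
      P[A|MeasurableSpace.comap (fun ω => (W ω, X ω)) inferInstance] ω < 1 := by
    filter_upwards [hπWver, hπWpos] with ω hω hpos
    rwa [← hω]
  refine integral_mul_eq_of_condExp_eq_inv_propensity (hW.prodMk hX).comap_le
    (hA.prodMk (hW.prodMk hX)).comap_le hA01 hA_int hq_int hn_meas (ae_of_all _ fun ω => hCn _)
    (hn_at_meas 1) (hn_at_meas 0) (hn_at_int 1) (hn_at_int 0)
    (fun ω => by rcases hA01 ω with h | h <;> simp [h]) hpos ?_
  filter_upwards [hbridge, hπWver] with ω hqω hω
  rw [hqω, hω]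

/-- **Population moment restriction underlying the estimating equation for the treatment
confounding bridge function.** If `q` solves the observed-level treatment bridge equation
`E[q(Z,A,X) | σ(A,W,X)] = 1/P(A|σ(W,X))` a.s., then for every bounded measurable function
`n` of `(W,A,X)`, `E[ q(Z,A,X) ⬝ n(W,A,X) ] = E[ n(W,1,X) + n(W,0,X) ]`. -/
theorem treatment_bridge_moment_restriction
    {Ω 𝓧 𝓩 𝓦 : Type*} [MeasurableSpace Ω]
    [MeasurableSpace 𝓧] [StandardBorelSpace 𝓧]
    [MeasurableSpace 𝓩] [StandardBorelSpace 𝓩] [MeasurableSpace 𝓦] [StandardBorelSpace 𝓦]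
    (P : Measure Ω) [IsProbabilityMeasure P]
    -- the random variables
    (A : Ω → ℝ) (X : Ω → 𝓧) (Z : Ω → 𝓩) (W : Ω → 𝓦)
    (hA : Measurable A) (hX : Measurable X) (hZ : Measurable Z) (hW : Measurable W)
    (hA01 : ∀ ω, A ω = 0 ∨ A ω = 1)
    -- positivity for a version `πW` of `P(A = 1 | σ(W, X))`
    (πW : Ω → ℝ)
    (hπWver : πW =ᵐ[P] P[A|MeasurableSpace.comap (fun ω => (W ω, X ω)) inferInstance])
    (hπWpos : ∀ᵐ ω ∂P, 0 < πW ω ∧ πW ω < 1)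
    -- `q` is a bounded measurable function of `(Z, A, X)`
    (q : 𝓩 × ℝ × 𝓧 → ℝ) (hq : Measurable q) (hqbdd : ∃ C, ∀ x, |q x| ≤ C)
    -- observed-level treatment bridge equation
    (hbridge : (P[(fun ω => q (Z ω, A ω, X ω))|
        MeasurableSpace.comap (fun ω => (A ω, W ω, X ω)) inferInstance])
      =ᵐ[P] fun ω => (A ω * πW ω + (1 - A ω) * (1 - πW ω))⁻¹) :
    ∀ n : 𝓦 × ℝ × 𝓧 → ℝ, Measurable n → (∃ C, ∀ x, |n x| ≤ C) →
      ∫ ω, q (Z ω, A ω, X ω) * n (W ω, A ω, X ω) ∂P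
        = ∫ ω, n (W ω, 1, X ω) + n (W ω, 0, X ω) ∂P :=
  treatment_bridge_moment_restriction_general P A X Z W hA hX hZ hW hA01 πW hπWver hπWpos q hq hqbdd
    hbridge
end

section
/- Let U, X be real random variables, let A : Ω → {0,1} satisfy P(A=1 | σ(U,X)) = (1 + exp(−(0.3 + 0.4·X − 0.6·U)))⁻¹ a.s., and let Z be a real random variable whose conditional distribution given σ(A,U,X) is the Gaussian law N(−0.2 − 0.3·X + 0.65·U, 0.5²) (in particular not depending on A). Then there exist real numbers α₀, α_a, α_z, α_x such that E[ 1 + exp((−1)^{1−A}·(α₀ + α_a·A + α_z·Z + α_x·X)) | σ(A,U,X) ] = 1/P(A | σ(U,X)) a.s., where P(A|σ(U,X)) := A·π + (1−A)·(1−π) with π := P(A=1|σ(U,X)). (Appendix claim that the parametric family q(Z,A,X;α) of equation (19) contains a valid latent-level treatment confounding bridge function for the simulation design.) -/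
open MeasureTheory ProbabilityTheory

/-!
Conditionally on `(A, U, X)` the bridge function is `1 + exp` of an affine function of the
Gaussian `Z`, so its conditional mean is `1 + exp` of an affine function of `(A, U, X)` by the
Gaussian moment generating function. Since `1 / P(A | U, X)` is `1 + exp (∓(0.3 + 0.4X − 0.6U))`
for the logistic propensity, it remains to match coefficients, which is possible in both arms
`A = 0` and `A = 1` simultaneously.
-/

lemma integral_one_add_exp_affine_gaussianReal (c t μ : ℝ) (v : NNReal) :
    ∫ z, (1 + Real.exp (c + t * z)) ∂gaussianReal μ v
      = 1 + Real.exp (c + μ * t + v * t ^ 2 / 2) := by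
  have hmgf : ∫ z, Real.exp (t * z) ∂gaussianReal μ v = Real.exp (μ * t + v * t ^ 2 / 2) :=
    congrFun mgf_fun_id_gaussianReal t
  simp_rw [Real.exp_add c]
  rw [integral_add (integrable_const 1) ((integrable_exp_mul_gaussianReal t).const_mul _),
    integral_const_mul, hmgf, ← Real.exp_add, add_assoc c]
  simp

lemma integral_one_add_exp_mul_affine_gaussianReal (s a b c μ : ℝ) (v : NNReal) :
    ∫ z, (1 + Real.exp (s * (a + b * z + c))) ∂gaussianReal μ v
      = 1 + Real.exp (s * (a + c) + μ * (s * b) + v * (s * b) ^ 2 / 2) := by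
  simp_rw [show ∀ z, s * (a + b * z + c) = s * (a + c) + s * b * z from fun _ => by ring]
  exact integral_one_add_exp_affine_gaussianReal _ _ _ _

lemma inv_one_sub_inv_one_add_exp_neg (t : ℝ) :
    (1 - (1 + Real.exp (-t))⁻¹)⁻¹ = 1 + Real.exp t := by
  rw [Real.exp_neg]
  field_simp
  ring

theorem simulation_treatment_bridge_exists_general
    {Ω : Type*} [MeasurableSpace Ω]
    (P : Measure Ω)
    -- the random variables
    (A : Ω → ℝ) (U : Ω → ℝ) (X : Ω → ℝ)
    (hA01 : ∀ ω, A ω = 0 ∨ A ω = 1)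
    -- `π` is a version of `P(A = 1 | σ(U,X))`, of logistic form
    (π : Ω → ℝ)
    (hπform : π =ᵐ[P] fun ω => (1 + Real.exp (-(0.3 + 0.4 * X ω - 0.6 * U ω)))⁻¹) :
    ∃ α₀ αa αz αx : ℝ, ∀ᵐ ω ∂P,
      (∫ z, (1 + Real.exp ((-1 : ℝ) ^ ((1 : ℝ) - A ω) *
            (α₀ + αa * A ω + αz * z + αx * X ω)))
          ∂(gaussianReal (-0.2 - 0.3 * X ω + 0.65 * U ω) ((0.5 : NNReal) ^ 2)))
        = (A ω * π ω + (1 - A ω) * (1 - π ω))⁻¹ := by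
  -- `0.65 αz = 0.6` cancels `U`; the `X`-coefficients and constants of both arms fix the rest.
  refine ⟨12/65 + 18/169 - 3/10, -(36/169), 12/13, -(8/65), ?_⟩
  filter_upwards [hπform] with ω hπ
  rw [integral_one_add_exp_mul_affine_gaussianReal, hπ]
  have hv : (((0.5 : NNReal) ^ 2 : NNReal) : ℝ) = 1 / 4 := by norm_num
  rcases hA01 ω with hA0 | hA1
  · rw [hA0, sub_zero, Real.rpow_one, hv]
    simp only [zero_mul, zero_add, one_mul, inv_one_sub_inv_one_add_exp_neg]
    congr 2
    ring
  · rw [hA1, sub_self, Real.rpow_zero, hv]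
    simp only [one_mul, zero_mul, add_zero, inv_inv]
    congr 2
    ring

/-- **Appendix claim: the parametric family `q(Z,A,X;α)` of equation (19) contains a valid
latent-level treatment confounding bridge function for the simulation design.** If
`P(A = 1 | σ(U,X))` is logistic in `(U,X)` and the conditional distribution of `Z` given
`σ(A,U,X)` is the Gaussian law `N(−0.2 − 0.3⬝X + 0.65⬝U, 0.5²)` (not depending on `A`),
then there are reals `α₀, α_a, α_z, α_x` with
`E[ 1 + exp((−1)^{1−A}⬝(α₀ + α_a⬝A + α_z⬝Z + α_x⬝X)) | σ(A,U,X) ] = 1/P(A|σ(U,X))` a.s.,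
the conditional expectation being computed against the regular conditional distribution. -/
theorem simulation_treatment_bridge_exists
    {Ω : Type*} [MeasurableSpace Ω]
    (P : Measure Ω) [IsProbabilityMeasure P]
    -- the random variables
    (A : Ω → ℝ) (U : Ω → ℝ) (X : Ω → ℝ) (Z : Ω → ℝ)
    (hA : Measurable A) (hU : Measurable U) (hX : Measurable X) (hZ : Measurable Z)
    (hA01 : ∀ ω, A ω = 0 ∨ A ω = 1)
    -- `π` is a version of `P(A = 1 | σ(U,X))`, of logistic form
    (π : Ω → ℝ)
    (hπver : π =ᵐ[P] P[A|MeasurableSpace.comap (fun ω => (U ω, X ω)) inferInstance])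
    (hπform : π =ᵐ[P] fun ω => (1 + Real.exp (-(0.3 + 0.4 * X ω - 0.6 * U ω)))⁻¹)
    -- the conditional distribution of `Z` given `σ(A,U,X)` is `N(−0.2 − 0.3X + 0.65U, 0.5²)`
    (hZlaw : ∀ f : ℝ → ℝ, Measurable f → (∃ C, ∀ x, |f x| ≤ C) →
      (P[(fun ω => f (Z ω))|
          MeasurableSpace.comap (fun ω => (A ω, U ω, X ω)) inferInstance])
        =ᵐ[P] fun ω =>
          ∫ z, f z ∂(gaussianReal (-0.2 - 0.3 * X ω + 0.65 * U ω) ((0.5 : NNReal) ^ 2))) :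
    ∃ α₀ αa αz αx : ℝ, ∀ᵐ ω ∂P,
      (∫ z, (1 + Real.exp ((-1 : ℝ) ^ ((1 : ℝ) - A ω) *
            (α₀ + αa * A ω + αz * z + αx * X ω)))
          ∂(gaussianReal (-0.2 - 0.3 * X ω + 0.65 * U ω) ((0.5 : NNReal) ^ 2)))
        = (A ω * π ω + (1 - A ω) * (1 - π ω))⁻¹ :=
  simulation_treatment_bridge_exists_general P A U X hA01 π hπform
end
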